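/- Interpolation for L◇_m: if Γ[Δ] ⇒ C is provable in L◇_m, where Δ is a nonempty type hedge occurring in context Γ[·], then there exists a type E such that (i) Δ ⇒ E is provable, (ii) Γ[E] ⇒ C is provable, (iii) σ_i(E) ≤ min(σ_i(Δ), σ_i(Γ[·] ⇒ C)) for each i, and (iv) τ_i(E) ≤ min(τ_i(Δ), τ_i(Γ[·] ⇒ C)) for each i. -/
import Mathlib


/-- Types of the multimodal bracketed Lambek calculus. -/
inductive ITy where
  | prim : ℕ → ITy
  | ldiv : ITy → ITy → ITy   -- ldiv A B = A \ B
  | rdiv : ITy → ITy → ITy   -- rdiv B A = B / A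
  | mul  : ITy → ITy → ITy
  | dia  : ℕ → ITy → ITy
  | box  : ℕ → ITy → ITy
deriving DecidableEq

/-- Type trees: leaves labeled by types, internal nodes are indexed brackets. -/
inductive ITree where
  | leaf : ITy → ITree
  | node : ℕ → List ITree → ITree

abbrev IHedge := List ITree

/-- Contexts: a hedge with one distinguished hole. -/
inductive ICtx where
  | hole : IHedge → IHedge → ICtx
  | brk  : ℕ → ICtx → IHedge → IHedge → ICtx

/-- Substitution of a hedge for the hole of a context. -/
def ICtx.plug : ICtx → IHedge → IHedge
  | .hole pre post, D => pre ++ D ++ post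
  | .brk i c pre post, D => pre ++ (ITree.node i (c.plug D) :: post)

/-- Generators of the free group: primitive types, left brackets, right brackets. -/
abbrev Gen := ℕ ⊕ ℕ ⊕ ℕ

def lb (i : ℕ) : FreeGroup Gen := FreeGroup.of (Sum.inr (Sum.inl i))
def rb (i : ℕ) : FreeGroup Gen := FreeGroup.of (Sum.inr (Sum.inr i))

/-- Free group interpretation of types. -/
def interpTy : ITy → FreeGroup Gen
  | .prim p => FreeGroup.of (Sum.inl p)
  | .ldiv A B => (interpTy A)⁻¹ * interpTy B
  | .rdiv B A => interpTy B * (interpTy A)⁻¹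
  | .mul A B => interpTy A * interpTy B
  | .dia i A => lb i * interpTy A * rb i
  | .box i A => (lb i)⁻¹ * interpTy A * (rb i)⁻¹

mutual
/-- Free group interpretation of type trees. -/
def interpTree : ITree → FreeGroup Gen
  | .leaf A => interpTy A
  | .node i ts => lb i * interpHedge ts * rb i
/-- Free group interpretation of hedges. -/
def interpHedge : List ITree → FreeGroup Gen
  | [] => 1
  | t :: ts => interpTree t * interpHedge ts
end

/-- Length of a type. -/
def lenTy : ITy → ℕ
  | .prim _ => 1
  | .ldiv A B => lenTy A + lenTy B
  | .rdiv B A => lenTy B + lenTy A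
  | .mul A B => lenTy A + lenTy B
  | .dia _ A => lenTy A + 2
  | .box _ A => lenTy A + 2

/-- Number of occurrences of the primitive type `p_i` in a type. -/
def sigmaTy (i : ℕ) : ITy → ℕ
  | .prim p => if p = i then 1 else 0
  | .ldiv A B => sigmaTy i A + sigmaTy i B
  | .rdiv B A => sigmaTy i B + sigmaTy i A
  | .mul A B => sigmaTy i A + sigmaTy i B
  | .dia _ A => sigmaTy i A
  | .box _ A => sigmaTy i A

/-- Total number of occurrences of `◇_i`, `□↓_i` in a type. -/
def tauTy (i : ℕ) : ITy → ℕ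
  | .prim _ => 0
  | .ldiv A B => tauTy i A + tauTy i B
  | .rdiv B A => tauTy i B + tauTy i A
  | .mul A B => tauTy i A + tauTy i B
  | .dia j A => (if j = i then 1 else 0) + tauTy i A
  | .box j A => (if j = i then 1 else 0) + tauTy i A

mutual
def sigmaTree (i : ℕ) : ITree → ℕ
  | .leaf A => sigmaTy i A
  | .node _ ts => sigmaHedge i ts
def sigmaHedge (i : ℕ) : List ITree → ℕ
  | [] => 0
  | t :: ts => sigmaTree i t + sigmaHedge i ts
end

mutual
/-- Total occurrences of `⟨_i`, `◇_i`, `□↓_i` in a tree. -/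
def tauTree (i : ℕ) : ITree → ℕ
  | .leaf A => tauTy i A
  | .node j ts => (if j = i then 1 else 0) + tauHedge i ts
def tauHedge (i : ℕ) : List ITree → ℕ
  | [] => 0
  | t :: ts => tauTree i t + tauHedge i ts
end

def sigmaCtx (i : ℕ) : ICtx → ℕ
  | .hole pre post => sigmaHedge i pre + sigmaHedge i post
  | .brk _ c pre post => sigmaHedge i pre + sigmaCtx i c + sigmaHedge i post

def tauCtx (i : ℕ) : ICtx → ℕ
  | .hole pre post => tauHedge i pre + tauHedge i post
  | .brk j c pre post => (if j = i then 1 else 0) + tauHedge i pre + tauCtx i c + tauHedge i post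
/-- L◇_m : the multimodal Lambek calculus with brackets
(the antecedent must be nonempty in the right rules for the divisions). -/
inductive IProv : IHedge → ITy → Prop where
  | id (p) : IProv [.leaf (.prim p)] (.prim p)
  | ldivL (G : IHedge) (D : ICtx) (A B C) :
      IProv G A → IProv (D.plug [.leaf B]) C →
      IProv (D.plug (G ++ [.leaf (.ldiv A B)])) C
  | ldivR (Pi : IHedge) (A B) : Pi ≠ [] →
      IProv (.leaf A :: Pi) B → IProv Pi (.ldiv A B)
  | rdivL (G : IHedge) (D : ICtx) (A B C) :
      IProv G A → IProv (D.plug [.leaf B]) C →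
      IProv (D.plug (.leaf (.rdiv B A) :: G)) C
  | rdivR (Pi : IHedge) (A B) : Pi ≠ [] →
      IProv (Pi ++ [.leaf A]) B → IProv Pi (.rdiv B A)
  | mulL (G : ICtx) (A B C) :
      IProv (G.plug [.leaf A, .leaf B]) C → IProv (G.plug [.leaf (.mul A B)]) C
  | mulR (G D : IHedge) (A B) :
      IProv G A → IProv D B → IProv (G ++ D) (.mul A B)
  | diaL (G : ICtx) (i A B) :
      IProv (G.plug [.node i [.leaf A]]) B → IProv (G.plug [.leaf (.dia i A)]) B
  | diaR (G : IHedge) (i A) :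
      IProv G A → IProv [.node i G] (.dia i A)
  | boxL (G : ICtx) (i A B) :
      IProv (G.plug [.leaf A]) B → IProv (G.plug [.node i [.leaf (.box i A)]]) B
  | boxR (G : IHedge) (i A) :
      IProv [.node i G] A → IProv G (.box i A)
  | cut (G : IHedge) (D : ICtx) (A B) :
      IProv G A → IProv (D.plug [.leaf A]) B → IProv (D.plug G) B

/- ===================== Infrastructure ===================== -/

open ITree ITy ICtx

theorem plug_ne_nil {c : ICtx} {X : IHedge} (h : X ≠ []) : c.plug X ≠ [] := by
  cases c <;> simp [ICtx.plug, h]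

@[simp] theorem sigmaHedge_nil (i : ℕ) : sigmaHedge i [] = 0 := rfl
@[simp] theorem sigmaHedge_cons (i : ℕ) (t ts) :
    sigmaHedge i (t :: ts) = sigmaTree i t + sigmaHedge i ts := rfl
@[simp] theorem tauHedge_nil (i : ℕ) : tauHedge i [] = 0 := rfl
@[simp] theorem tauHedge_cons (i : ℕ) (t ts) :
    tauHedge i (t :: ts) = tauTree i t + tauHedge i ts := rfl

@[simp] theorem sigmaHedge_append (i : ℕ) (a b : IHedge) :
    sigmaHedge i (a ++ b) = sigmaHedge i a + sigmaHedge i b := by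
  induction a with
  | nil => simp
  | cons t ts ih => simp [ih]; omega

@[simp] theorem tauHedge_append (i : ℕ) (a b : IHedge) :
    tauHedge i (a ++ b) = tauHedge i a + tauHedge i b := by
  induction a with
  | nil => simp
  | cons t ts ih => simp [ih]; omega

@[simp] theorem sigmaHedge_plug (i : ℕ) (c : ICtx) (X : IHedge) :
    sigmaHedge i (c.plug X) = sigmaCtx i c + sigmaHedge i X := by
  induction c generalizing X with
  | hole p q => simp [ICtx.plug, sigmaCtx]; omega
  | brk j c p q ih => simp [ICtx.plug, sigmaCtx, sigmaTree, ih]; omega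

@[simp] theorem tauHedge_plug (i : ℕ) (c : ICtx) (X : IHedge) :
    tauHedge i (c.plug X) = tauCtx i c + tauHedge i X := by
  induction c generalizing X with
  | hole p q => simp [ICtx.plug, tauCtx]; omega
  | brk j c p q ih => simp [ICtx.plug, tauCtx, tauTree, ih]; omega
/-- Result of comparing two segment decompositions of the same list. -/
def SegRes {α : Type} (p Δ q p' Δ' q' : List α) : Prop :=
  (∃ a b, p' = p ++ a ∧ Δ = a ++ Δ' ++ b ∧ q' = b ++ q) ∨
  (∃ a b, p = p' ++ a ∧ Δ' = a ++ Δ ++ b ∧ q = b ++ q') ∨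
  (∃ m, p' = p ++ Δ ++ m ∧ q = m ++ Δ' ++ q') ∨
  (∃ m, p = p' ++ Δ' ++ m ∧ q' = m ++ Δ ++ q) ∨
  (∃ X Y Z, X ≠ [] ∧ Y ≠ [] ∧ Z ≠ [] ∧ Δ = X ++ Y ∧ Δ' = Y ++ Z ∧ p' = p ++ X ∧ q = Z ++ q') ∨
  (∃ X Y Z, X ≠ [] ∧ Y ≠ [] ∧ Z ≠ [] ∧ Δ' = X ++ Y ∧ Δ = Y ++ Z ∧ p = p' ++ X ∧ q' = Z ++ q)

theorem SegRes.symm {α : Type} {p Δ q p' Δ' q' : List α} (h : SegRes p Δ q p' Δ' q') :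
    SegRes p' Δ' q' p Δ q := by
  rcases h with h | h | h | h | h | h
  · exact Or.inr (Or.inl h)
  · exact Or.inl h
  · exact Or.inr (Or.inr (Or.inr (Or.inl h)))
  · exact Or.inr (Or.inr (Or.inl h))
  · exact Or.inr (Or.inr (Or.inr (Or.inr (Or.inr h))))
  · exact Or.inr (Or.inr (Or.inr (Or.inr (Or.inl h))))

theorem seg_aux {α : Type} : ∀ (p' Δ q Δ' q' : List α), Δ ≠ [] → Δ' ≠ [] →
    Δ ++ q = p' ++ Δ' ++ q' → SegRes [] Δ q p' Δ' q' := by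
  intro p'
  induction p' with
  | nil =>
    intro Δ q Δ' q' h1 h2 h
    simp only [List.nil_append] at h
    rcases List.append_eq_append_iff.1 h with ⟨a', rfl, rfl⟩ | ⟨c', rfl, rfl⟩
    · exact Or.inr (Or.inl ⟨[], a', by simp⟩)
    · exact Or.inl ⟨[], c', by simp⟩
  | cons t p₂ ih =>
    intro Δ q Δ' q' h1 h2 h
    cases Δ with
    | nil => exact absurd rfl h1
    | cons d Δ₂ =>
      simp only [List.cons_append, List.cons.injEq] at h
      obtain ⟨rfl, h⟩ := h
      by_cases hΔ₂ : Δ₂ = []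
      · subst hΔ₂
        simp only [List.nil_append] at h
        exact Or.inr (Or.inr (Or.inl ⟨p₂, by simp, by simp [h]⟩))
      · rcases ih Δ₂ q Δ' q' hΔ₂ h2 h with
          ⟨a, b, ha, hb, hc⟩ | ⟨a, b, ha, hb, hc⟩ | ⟨m, hm1, hm2⟩ | ⟨m, hm1, hm2⟩ |
          ⟨X, Y, Z, hX, hY, hZ, e1, e2, e3, e4⟩ | ⟨X, Y, Z, hX, hY, hZ, e1, e2, e3, e4⟩
        · exact Or.inl ⟨d :: a, b, by simp [ha], by simp [hb], hc⟩
        · obtain ⟨rfl, rfl⟩ : p₂ = [] ∧ a = [] := by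
            have := List.append_eq_nil_iff.mp ha.symm; exact this
          simp only [List.nil_append] at hb
          by_cases hbn : b = []
          · subst hbn
            refine Or.inl ⟨[d], [], ?_, ?_, ?_⟩ <;> simp [hb, hc]
          · refine Or.inr (Or.inr (Or.inr (Or.inr (Or.inl
              ⟨[d], Δ₂, b, by simp, hΔ₂, hbn, by simp, by simp [hb], by simp, hc⟩))))
        · exact Or.inr (Or.inr (Or.inl ⟨m, by simp [hm1], hm2⟩))
        · exfalso
          have := congrArg List.length hm1
          simp at this
          exact h2 (List.length_eq_zero_iff.mp (by omega))
        · exact Or.inr (Or.inr (Or.inr (Or.inr (Or.inl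
            ⟨d :: X, Y, Z, by simp, hY, hZ, by simp [e1], e2, by simp [e3], e4⟩))))
        · exact absurd (List.append_eq_nil_iff.mp e3.symm).2 hX

theorem seg_cases {α : Type} : ∀ (p Δ q p' Δ' q' : List α), Δ ≠ [] → Δ' ≠ [] →
    p ++ Δ ++ q = p' ++ Δ' ++ q' → SegRes p Δ q p' Δ' q' := by
  intro p
  induction p with
  | nil =>
    intro Δ q p' Δ' q' h1 h2 h
    exact seg_aux p' Δ q Δ' q' h1 h2 (by simpa using h)
  | cons t p₂ ih =>
    intro Δ q p' Δ' q' h1 h2 h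
    cases p' with
    | nil =>
      exact SegRes.symm (seg_aux (t :: p₂) Δ' q' Δ q h2 h1 (by simpa using h.symm))
    | cons t' p₂' =>
      simp only [List.cons_append, List.cons.injEq] at h
      obtain ⟨rfl, h⟩ := h
      rcases ih Δ q p₂' Δ' q' h1 h2 h with
        ⟨a, b, ha, hb, hc⟩ | ⟨a, b, ha, hb, hc⟩ | ⟨m, hm1, hm2⟩ | ⟨m, hm1, hm2⟩ |
        ⟨X, Y, Z, hX, hY, hZ, e1, e2, e3, e4⟩ | ⟨X, Y, Z, hX, hY, hZ, e1, e2, e3, e4⟩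
      · exact Or.inl ⟨a, b, by simp [ha], hb, hc⟩
      · exact Or.inr (Or.inl ⟨a, b, by simp [ha], hb, hc⟩)
      · exact Or.inr (Or.inr (Or.inl ⟨m, by simp [hm1], hm2⟩))
      · exact Or.inr (Or.inr (Or.inr (Or.inl ⟨m, by simp [hm1], hm2⟩)))
      · exact Or.inr (Or.inr (Or.inr (Or.inr (Or.inl
          ⟨X, Y, Z, hX, hY, hZ, e1, e2, by simp [e3], e4⟩))))
      · exact Or.inr (Or.inr (Or.inr (Or.inr (Or.inr
          ⟨X, Y, Z, hX, hY, hZ, e1, e2, by simp [e3], e4⟩))))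
/- ===================== Two-hole contexts ===================== -/

inductive ICtx2 where
  | ss : IHedge → IHedge → IHedge → ICtx2
  | st : IHedge → IHedge → ℕ → ICtx → IHedge → ICtx2
  | ts : IHedge → ℕ → ICtx → IHedge → IHedge → ICtx2
  | tt : IHedge → ℕ → ICtx → IHedge → ℕ → ICtx → IHedge → ICtx2
  | deep : IHedge → ℕ → ICtx2 → IHedge → ICtx2

/-- Fill the first hole, leaving the second. -/
def ICtx2.fill1 : ICtx2 → IHedge → ICtx
  | .ss p m q, X => .hole (p ++ X ++ m) q
  | .st p m j c q, X => .brk j c (p ++ X ++ m) q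
  | .ts p j c m q, X => .hole (p ++ (ITree.node j (c.plug X) :: m)) q
  | .tt p j c m k c' q, X => .brk k c' (p ++ (ITree.node j (c.plug X) :: m)) q
  | .deep p j c2 q, X => .brk j (c2.fill1 X) p q

/-- Fill the second hole, leaving the first. -/
def ICtx2.fill2 : ICtx2 → IHedge → ICtx
  | .ss p m q, Y => .hole p (m ++ Y ++ q)
  | .st p m j c q, Y => .hole p (m ++ (ITree.node j (c.plug Y) :: q))
  | .ts p j c m q, Y => .brk j c p (m ++ Y ++ q)
  | .tt p j c m k c' q, Y => .brk j c p (m ++ (ITree.node k (c'.plug Y) :: q))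
  | .deep p j c2 q, Y => .brk j (c2.fill2 Y) p q

theorem ICtx2.swap (c2 : ICtx2) (X Y : IHedge) :
    (c2.fill1 X).plug Y = (c2.fill2 Y).plug X := by
  induction c2 generalizing X Y with
  | ss p m q => simp [fill1, fill2, ICtx.plug]
  | st p m j c q => simp [fill1, fill2, ICtx.plug]
  | ts p j c m q => simp [fill1, fill2, ICtx.plug]
  | tt p j c m k c' q => simp [fill1, fill2, ICtx.plug]
  | deep p j c2 q ih => simp [fill1, fill2, ICtx.plug, ih]

/- ===================== Context composition ===================== -/

/-- Composition of contexts: the hole of the second inside the hole of the first. -/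
def ICtx.comp : ICtx → ICtx → ICtx
  | .hole p q, .hole p' q' => .hole (p ++ p') (q' ++ q)
  | .hole p q, .brk j c p' q' => .brk j c (p ++ p') (q' ++ q)
  | .brk j c p q, K => .brk j (c.comp K) p q

@[simp] theorem ICtx.comp_plug (c K : ICtx) (X : IHedge) :
    (c.comp K).plug X = c.plug (K.plug X) := by
  induction c generalizing X with
  | hole p q => cases K <;> simp [ICtx.comp, ICtx.plug]
  | brk j c p q ih => simp [ICtx.comp, ICtx.plug, ih]

/- ===================== Inversion lemmas ===================== -/

/-- Plugging producing a singleton. -/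
theorem plug_eq_singleton {c : ICtx} {X : IHedge} {t : ITree} (hX : X ≠ [])
    (h : c.plug X = [t]) :
    (c = .hole [] [] ∧ X = [t]) ∨
    (∃ j d, c = .brk j d [] [] ∧ t = ITree.node j (d.plug X)) := by
  have hXl : 1 ≤ X.length := List.length_pos_iff.mpr hX
  cases c with
  | hole p q =>
    left
    simp only [ICtx.plug] at h
    have hl := congrArg List.length h
    simp only [List.length_append, List.length_cons, List.length_nil] at hl
    have hp : p = [] := List.length_eq_zero_iff.mp (by omega)
    have hq : q = [] := List.length_eq_zero_iff.mp (by omega)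
    subst hp; subst hq
    simp only [List.nil_append, List.append_nil] at h
    exact ⟨rfl, h⟩
  | brk j d p q =>
    right
    simp only [ICtx.plug] at h
    have hl := congrArg List.length h
    simp only [List.length_append, List.length_cons, List.length_nil] at hl
    have hp : p = [] := List.length_eq_zero_iff.mp (by omega)
    subst hp
    simp only [List.nil_append, List.cons.injEq] at h
    obtain ⟨h1, rfl⟩ := h
    exact ⟨j, d, rfl, h1.symm⟩

/-- Plugging producing a singleton node. -/
theorem plug_eq_node {c : ICtx} {X G : IHedge} {i : ℕ} (hX : X ≠ [])
    (h : c.plug X = [ITree.node i G]) :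
    (c = .hole [] [] ∧ X = [ITree.node i G]) ∨
    (∃ d, c = .brk i d [] [] ∧ d.plug X = G) := by
  rcases plug_eq_singleton hX h with ⟨h1, h2⟩ | ⟨j, d, h1, h2⟩
  · exact Or.inl ⟨h1, h2⟩
  · cases h2
    exact Or.inr ⟨d, h1, rfl⟩

/-- Plugging producing an append. -/
theorem plug_eq_append {c : ICtx} {X H₁ H₂ : IHedge} (hX : X ≠ [])
    (h : c.plug X = H₁ ++ H₂) :
    (∃ c₁ : ICtx, c₁.plug X = H₁ ∧ ∀ Y, c.plug Y = c₁.plug Y ++ H₂) ∨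
    (∃ c₂ : ICtx, c₂.plug X = H₂ ∧ ∀ Y, c.plug Y = H₁ ++ c₂.plug Y) ∨
    (∃ p q X₁ X₂, X₁ ≠ [] ∧ X₂ ≠ [] ∧ c = .hole p q ∧ X = X₁ ++ X₂ ∧
      H₁ = p ++ X₁ ∧ H₂ = X₂ ++ q) := by
  cases c with
  | hole p q =>
    simp only [ICtx.plug] at h
    rw [List.append_assoc] at h
    rcases List.append_eq_append_iff.1 h with ⟨a, rfl, h2⟩ | ⟨a, rfl, rfl⟩
    · -- H₁ = p ++ a, X ++ q = a ++ H₂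
      rcases List.append_eq_append_iff.1 h2 with ⟨b, rfl, rfl⟩ | ⟨b, hX', rfl⟩
      · -- a = X ++ b, q = b ++ H₂
        exact Or.inl ⟨.hole p b, by simp [ICtx.plug], fun Y => by simp [ICtx.plug]⟩
      · -- X = a ++ b, H₂ = b ++ q
        by_cases ha : a = []
        · subst ha
          exact Or.inr (Or.inl ⟨.hole [] q, by simp [ICtx.plug, hX'],
            fun Y => by simp [ICtx.plug]⟩)
        · by_cases hb : b = []
          · subst hb
            exact Or.inl ⟨.hole p [], by simp [ICtx.plug, hX'],
              fun Y => by simp [ICtx.plug]⟩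
          · exact Or.inr (Or.inr ⟨p, q, a, b, ha, hb, rfl, hX', by simp, rfl⟩)
    · -- p = H₁ ++ a, H₂ = a ++ X ++ q
      exact Or.inr (Or.inl ⟨.hole a q, by simp [ICtx.plug], fun Y => by simp [ICtx.plug]⟩)
  | brk j d p q =>
    simp only [ICtx.plug] at h
    rcases List.append_eq_append_iff.1 h with ⟨a, rfl, h2⟩ | ⟨a, rfl, rfl⟩
    · cases a with
      | nil =>
        exact Or.inr (Or.inl ⟨.brk j d [] q, by simpa [ICtx.plug] using h2,
          fun Y => by simp [ICtx.plug]⟩)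
      | cons t a' =>
        simp only [List.cons_append, List.cons.injEq] at h2
        obtain ⟨rfl, rfl⟩ := h2
        exact Or.inl ⟨.brk j d p a', by simp [ICtx.plug], fun Y => by simp [ICtx.plug]⟩
    · exact Or.inr (Or.inl ⟨.brk j d a q, by simp [ICtx.plug], fun Y => by simp [ICtx.plug]⟩)
/- ===================== Decomposition ===================== -/

theorem singleton_seg {α : Type} {a b s : List α} {t : α} (hs : s ≠ [])
    (h : a ++ s ++ b = [t]) : a = [] ∧ s = [t] ∧ b = [] := by
  have hl := congrArg List.length h
  have hs1 : 1 ≤ s.length := List.length_pos_iff.mpr hs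
  simp only [List.length_append, List.length_cons, List.length_nil] at hl
  have ha : a = [] := List.length_eq_zero_iff.mp (by omega)
  have hb : b = [] := List.length_eq_zero_iff.mp (by omega)
  subst ha; subst hb
  simp only [List.nil_append, List.append_nil] at h
  exact ⟨rfl, h, rfl⟩

theorem singleton_split {α : Type} {Y Z : List α} {t : α} (hY : Y ≠ []) (hZ : Z ≠ [])
    (h : Y ++ Z = [t]) : False := by
  have hl := congrArg List.length h
  have h1 : 1 ≤ Y.length := List.length_pos_iff.mpr hY
  have h2 : 1 ≤ Z.length := List.length_pos_iff.mpr hZ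
  simp only [List.length_append, List.length_cons, List.length_nil] at hl
  omega

/-- Result of comparing two context decompositions of the same hedge. -/
def DecompRes (G G' : ICtx) (Δ Δ' : IHedge) : Prop :=
  (∃ K : ICtx, K.plug Δ' = Δ ∧ ∀ X, G'.plug X = G.plug (K.plug X)) ∨
  (∃ K : ICtx, K.plug Δ = Δ' ∧ ∀ X, G.plug X = G'.plug (K.plug X)) ∨
  (∃ c2 : ICtx2, (G = c2.fill2 Δ' ∧ G' = c2.fill1 Δ) ∨ (G = c2.fill1 Δ' ∧ G' = c2.fill2 Δ)) ∨
  (∃ (K : ICtx) (X Y Z : IHedge), X ≠ [] ∧ Y ≠ [] ∧ Z ≠ [] ∧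
    ((Δ = X ++ Y ∧ Δ' = Y ++ Z ∧ (∀ W, G.plug W = K.plug (W ++ Z)) ∧
        (∀ W, G'.plug W = K.plug (X ++ W))) ∨
     (Δ' = X ++ Y ∧ Δ = Y ++ Z ∧ (∀ W, G.plug W = K.plug (X ++ W)) ∧
        (∀ W, G'.plug W = K.plug (W ++ Z)))))

theorem DecompRes.symm {G G' : ICtx} {Δ Δ' : IHedge} (h : DecompRes G G' Δ Δ') :
    DecompRes G' G Δ' Δ := by
  rcases h with h | h | ⟨c2, h | h⟩ | ⟨K, X, Y, Z, h1, h2, h3, h | h⟩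
  · exact Or.inr (Or.inl h)
  · exact Or.inl h
  · exact Or.inr (Or.inr (Or.inl ⟨c2, Or.inr ⟨h.2, h.1⟩⟩))
  · exact Or.inr (Or.inr (Or.inl ⟨c2, Or.inl ⟨h.2, h.1⟩⟩))
  · exact Or.inr (Or.inr (Or.inr ⟨K, X, Y, Z, h1, h2, h3,
      Or.inr ⟨h.1, h.2.1, h.2.2.2, h.2.2.1⟩⟩))
  · exact Or.inr (Or.inr (Or.inr ⟨K, X, Y, Z, h1, h2, h3,
      Or.inl ⟨h.1, h.2.1, h.2.2.2, h.2.2.1⟩⟩))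

theorem decomp_hole (p q : IHedge) (G' : ICtx) (Δ Δ' : IHedge)
    (h1 : Δ ≠ []) (h2 : Δ' ≠ []) (h : (ICtx.hole p q).plug Δ = G'.plug Δ') :
    DecompRes (ICtx.hole p q) G' Δ Δ' := by
  cases G' with
  | hole p' q' =>
    simp only [ICtx.plug] at h
    rcases seg_cases p Δ q p' Δ' q' h1 h2 h with
      ⟨a, b, rfl, rfl, rfl⟩ | ⟨a, b, rfl, rfl, rfl⟩ | ⟨m, rfl, rfl⟩ | ⟨m, rfl, rfl⟩ |
      ⟨X, Y, Z, hX, hY, hZ, e1, e2, e3, e4⟩ | ⟨X, Y, Z, hX, hY, hZ, e1, e2, e3, e4⟩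
    · exact Or.inl ⟨.hole a b, by simp [ICtx.plug], fun W => by simp [ICtx.plug]⟩
    · exact Or.inr (Or.inl ⟨.hole a b, by simp [ICtx.plug], fun W => by simp [ICtx.plug]⟩)
    · exact Or.inr (Or.inr (Or.inl ⟨.ss p m q', Or.inl
        ⟨by simp [ICtx2.fill2], by simp [ICtx2.fill1]⟩⟩))
    · exact Or.inr (Or.inr (Or.inl ⟨.ss p' m q, Or.inr
        ⟨by simp [ICtx2.fill1], by simp [ICtx2.fill2]⟩⟩))
    · subst e1; subst e2; subst e3; subst e4
      exact Or.inr (Or.inr (Or.inr ⟨.hole p q', X, Y, Z, hX, hY, hZ, Or.inl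
        ⟨rfl, rfl, fun W => by simp [ICtx.plug], fun W => by simp [ICtx.plug]⟩⟩))
    · subst e1; subst e2; subst e3; subst e4
      exact Or.inr (Or.inr (Or.inr ⟨.hole p' q, X, Y, Z, hX, hY, hZ, Or.inr
        ⟨rfl, rfl, fun W => by simp [ICtx.plug], fun W => by simp [ICtx.plug]⟩⟩))
  | brk j c p' q' =>
    simp only [ICtx.plug] at h
    have h' : p ++ Δ ++ q = p' ++ [ITree.node j (c.plug Δ')] ++ q' := by
      simpa using h
    rcases seg_cases p Δ q p' [ITree.node j (c.plug Δ')] q' h1 (by simp) h' with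
      ⟨a, b, rfl, rfl, rfl⟩ | ⟨a, b, rfl, hn, rfl⟩ | ⟨m, rfl, rfl⟩ | ⟨m, rfl, rfl⟩ |
      ⟨X, Y, Z, hX, hY, hZ, e1, e2, e3, e4⟩ | ⟨X, Y, Z, hX, hY, hZ, e1, e2, e3, e4⟩
    · exact Or.inl ⟨.brk j c a b, by simp [ICtx.plug], fun W => by simp [ICtx.plug]⟩
    · obtain ⟨rfl, hΔ, rfl⟩ := singleton_seg h1 hn.symm
      subst hΔ
      exact Or.inl ⟨.brk j c [] [], by simp [ICtx.plug], fun W => by simp [ICtx.plug]⟩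
    · exact Or.inr (Or.inr (Or.inl ⟨.st p m j c q', Or.inl
        ⟨by simp [ICtx2.fill2, ICtx.plug], by simp [ICtx2.fill1]⟩⟩))
    · exact Or.inr (Or.inr (Or.inl ⟨.ts p' j c m q, Or.inr
        ⟨by simp [ICtx2.fill1, ICtx.plug], by simp [ICtx2.fill2]⟩⟩))
    · exact absurd e2 (by intro e; exact singleton_split hY hZ e.symm)
    · exact absurd e1 (by intro e; exact singleton_split hX hY e.symm)

theorem decomp_brk_lift (j : ℕ) (c c' : ICtx) (p q : IHedge) {Δ Δ' : IHedge}
    (h : DecompRes c c' Δ Δ') :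
    DecompRes (ICtx.brk j c p q) (ICtx.brk j c' p q) Δ Δ' := by
  rcases h with
    ⟨K, hK, hKe⟩ | ⟨K, hK, hKe⟩ | ⟨c2, ⟨e5, e6⟩ | ⟨e5, e6⟩⟩ |
    ⟨K, X, Y, Z, hX, hY, hZ, ⟨f1, f2, f3, f4⟩ | ⟨f1, f2, f3, f4⟩⟩
  · exact Or.inl ⟨K, hK, fun W => by simp [ICtx.plug, hKe W]⟩
  · exact Or.inr (Or.inl ⟨K, hK, fun W => by simp [ICtx.plug, hKe W]⟩)
  · exact Or.inr (Or.inr (Or.inl ⟨.deep p j c2 q, Or.inl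
      ⟨by simp [ICtx2.fill2, e5], by simp [ICtx2.fill1, e6]⟩⟩))
  · exact Or.inr (Or.inr (Or.inl ⟨.deep p j c2 q, Or.inr
      ⟨by simp [ICtx2.fill1, e5], by simp [ICtx2.fill2, e6]⟩⟩))
  · exact Or.inr (Or.inr (Or.inr ⟨.brk j K p q, X, Y, Z, hX, hY, hZ, Or.inl
      ⟨f1, f2, fun W => by simp [ICtx.plug, f3 W], fun W => by simp [ICtx.plug, f4 W]⟩⟩))
  · exact Or.inr (Or.inr (Or.inr ⟨.brk j K p q, X, Y, Z, hX, hY, hZ, Or.inr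
      ⟨f1, f2, fun W => by simp [ICtx.plug, f3 W], fun W => by simp [ICtx.plug, f4 W]⟩⟩))

theorem decomp : ∀ (G G' : ICtx) (Δ Δ' : IHedge), Δ ≠ [] → Δ' ≠ [] →
    G.plug Δ = G'.plug Δ' → DecompRes G G' Δ Δ' := by
  intro G
  induction G with
  | hole p q =>
    intro G' Δ Δ' h1 h2 h
    exact decomp_hole p q G' Δ Δ' h1 h2 h
  | brk j c p q ih =>
    intro G' Δ Δ' h1 h2 h
    cases G' with
    | hole p' q' =>
      exact DecompRes.symm (decomp_hole p' q' _ Δ' Δ h2 h1 h.symm)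
    | brk j' c' p' q' =>
      simp only [ICtx.plug] at h
      have h' : p ++ [ITree.node j (c.plug Δ)] ++ q
          = p' ++ [ITree.node j' (c'.plug Δ')] ++ q' := by simpa using h
      rcases seg_cases p [ITree.node j (c.plug Δ)] q p' [ITree.node j' (c'.plug Δ')] q'
          (by simp) (by simp) h' with
        ⟨a, b, rfl, hn, rfl⟩ | ⟨a, b, rfl, hn, rfl⟩ | ⟨m, rfl, rfl⟩ | ⟨m, rfl, rfl⟩ |
        ⟨X, Y, Z, hX, hY, hZ, e1, e2, e3, e4⟩ | ⟨X, Y, Z, hX, hY, hZ, e1, e2, e3, e4⟩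
      · obtain ⟨rfl, hn2, rfl⟩ := singleton_seg (by simp) hn.symm
        obtain ⟨hj, hcc⟩ : j = j' ∧ c.plug Δ = c'.plug Δ' := by
          have := hn2.symm; simp only [List.cons.injEq, ITree.node.injEq] at this
          exact ⟨this.1.1, this.1.2⟩
        subst hj
        simp only [List.append_nil, List.nil_append]
        exact decomp_brk_lift j c c' p q (ih c' Δ Δ' h1 h2 hcc)
      · obtain ⟨rfl, hn2, rfl⟩ := singleton_seg (by simp) hn.symm
        obtain ⟨hj, hcc⟩ : j = j' ∧ c.plug Δ = c'.plug Δ' := by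
          simp only [List.cons.injEq, ITree.node.injEq] at hn2
          exact ⟨hn2.1.1, hn2.1.2⟩
        subst hj
        simp only [List.append_nil, List.nil_append]
        exact decomp_brk_lift j c c' p' q' (ih c' Δ Δ' h1 h2 hcc)
      · exact Or.inr (Or.inr (Or.inl ⟨.tt p j c m j' c' q', Or.inl
          ⟨by simp [ICtx2.fill2, ICtx.plug], by simp [ICtx2.fill1, ICtx.plug]⟩⟩))
      · exact Or.inr (Or.inr (Or.inl ⟨.tt p' j' c' m j c q, Or.inr
          ⟨by simp [ICtx2.fill1, ICtx.plug], by simp [ICtx2.fill2, ICtx.plug]⟩⟩))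
      · exact absurd e1 (by intro e; exact singleton_split hX hY e.symm)
      · exact absurd e1 (by intro e; exact singleton_split hX hY e.symm)
/- ===================== Cut-free systems ===================== -/

/-- Cut-free provability. -/
inductive IProvCF : IHedge → ITy → Prop where
  | id (p) : IProvCF [.leaf (.prim p)] (.prim p)
  | ldivL (G : IHedge) (D : ICtx) (A B C) :
      IProvCF G A → IProvCF (D.plug [.leaf B]) C →
      IProvCF (D.plug (G ++ [.leaf (.ldiv A B)])) C
  | ldivR (Pi : IHedge) (A B) : Pi ≠ [] →
      IProvCF (.leaf A :: Pi) B → IProvCF Pi (.ldiv A B)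
  | rdivL (G : IHedge) (D : ICtx) (A B C) :
      IProvCF G A → IProvCF (D.plug [.leaf B]) C →
      IProvCF (D.plug (.leaf (.rdiv B A) :: G)) C
  | rdivR (Pi : IHedge) (A B) : Pi ≠ [] →
      IProvCF (Pi ++ [.leaf A]) B → IProvCF Pi (.rdiv B A)
  | mulL (G : ICtx) (A B C) :
      IProvCF (G.plug [.leaf A, .leaf B]) C → IProvCF (G.plug [.leaf (.mul A B)]) C
  | mulR (G D : IHedge) (A B) :
      IProvCF G A → IProvCF D B → IProvCF (G ++ D) (.mul A B)
  | diaL (G : ICtx) (i A B) :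
      IProvCF (G.plug [.node i [.leaf A]]) B → IProvCF (G.plug [.leaf (.dia i A)]) B
  | diaR (G : IHedge) (i A) :
      IProvCF G A → IProvCF [.node i G] (.dia i A)
  | boxL (G : ICtx) (i A B) :
      IProvCF (G.plug [.leaf A]) B → IProvCF (G.plug [.node i [.leaf (.box i A)]]) B
  | boxR (G : IHedge) (i A) :
      IProvCF [.node i G] A → IProvCF G (.box i A)

/-- Height-indexed cut-free provability. -/
inductive IPH : ℕ → IHedge → ITy → Prop where
  | id (n p) : IPH n [.leaf (.prim p)] (.prim p)
  | ldivL (n) (G : IHedge) (D : ICtx) (A B C) :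
      IPH n G A → IPH n (D.plug [.leaf B]) C →
      IPH (n+1) (D.plug (G ++ [.leaf (.ldiv A B)])) C
  | ldivR (n) (Pi : IHedge) (A B) : Pi ≠ [] →
      IPH n (.leaf A :: Pi) B → IPH (n+1) Pi (.ldiv A B)
  | rdivL (n) (G : IHedge) (D : ICtx) (A B C) :
      IPH n G A → IPH n (D.plug [.leaf B]) C →
      IPH (n+1) (D.plug (.leaf (.rdiv B A) :: G)) C
  | rdivR (n) (Pi : IHedge) (A B) : Pi ≠ [] →
      IPH n (Pi ++ [.leaf A]) B → IPH (n+1) Pi (.rdiv B A)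
  | mulL (n) (G : ICtx) (A B C) :
      IPH n (G.plug [.leaf A, .leaf B]) C → IPH (n+1) (G.plug [.leaf (.mul A B)]) C
  | mulR (n) (G D : IHedge) (A B) :
      IPH n G A → IPH n D B → IPH (n+1) (G ++ D) (.mul A B)
  | diaL (n) (G : ICtx) (i A B) :
      IPH n (G.plug [.node i [.leaf A]]) B → IPH (n+1) (G.plug [.leaf (.dia i A)]) B
  | diaR (n) (G : IHedge) (i A) :
      IPH n G A → IPH (n+1) [.node i G] (.dia i A)
  | boxL (n) (G : ICtx) (i A B) :
      IPH n (G.plug [.leaf A]) B → IPH (n+1) (G.plug [.node i [.leaf (.box i A)]]) B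
  | boxR (n) (G : IHedge) (i A) :
      IPH n [.node i G] A → IPH (n+1) G (.box i A)

theorem IPH.mono : ∀ {n G A}, IPH n G A → IPH (n+1) G A := by
  intro n G A h
  induction h with
  | id n p => exact .id _ p
  | ldivL n G D A B C h1 h2 ih1 ih2 => exact .ldivL _ G D A B C ih1 ih2
  | ldivR n Pi A B hne h ih => exact .ldivR _ Pi A B hne ih
  | rdivL n G D A B C h1 h2 ih1 ih2 => exact .rdivL _ G D A B C ih1 ih2
  | rdivR n Pi A B hne h ih => exact .rdivR _ Pi A B hne ih
  | mulL n G A B C h ih => exact .mulL _ G A B C ih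
  | mulR n G D A B h1 h2 ih1 ih2 => exact .mulR _ G D A B ih1 ih2
  | diaL n G i A B h ih => exact .diaL _ G i A B ih
  | diaR n G i A h ih => exact .diaR _ G i A ih
  | boxL n G i A B h ih => exact .boxL _ G i A B ih
  | boxR n G i A h ih => exact .boxR _ G i A ih

theorem IPH.le_mono : ∀ {n m G A}, n ≤ m → IPH n G A → IPH m G A := by
  intro n m G A h hp
  induction h with
  | refl => exact hp
  | step _ ih => exact ih.mono

theorem IPH.toCF : ∀ {n G A}, IPH n G A → IProvCF G A := by
  intro n G A h
  induction h with
  | id n p => exact .id p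
  | ldivL n G D A B C h1 h2 ih1 ih2 => exact .ldivL G D A B C ih1 ih2
  | ldivR n Pi A B hne h ih => exact .ldivR Pi A B hne ih
  | rdivL n G D A B C h1 h2 ih1 ih2 => exact .rdivL G D A B C ih1 ih2
  | rdivR n Pi A B hne h ih => exact .rdivR Pi A B hne ih
  | mulL n G A B C h ih => exact .mulL G A B C ih
  | mulR n G D A B h1 h2 ih1 ih2 => exact .mulR G D A B ih1 ih2
  | diaL n G i A B h ih => exact .diaL G i A B ih
  | diaR n G i A h ih => exact .diaR G i A ih
  | boxL n G i A B h ih => exact .boxL G i A B ih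
  | boxR n G i A h ih => exact .boxR G i A ih

theorem IProvCF.toIPH : ∀ {G A}, IProvCF G A → ∃ n, IPH n G A := by
  intro G A h
  induction h with
  | id p => exact ⟨0, .id 0 p⟩
  | ldivL G D A B C h1 h2 ih1 ih2 =>
    obtain ⟨n1, p1⟩ := ih1; obtain ⟨n2, p2⟩ := ih2
    exact ⟨max n1 n2 + 1, .ldivL _ G D A B C (p1.le_mono (le_max_left _ _))
      (p2.le_mono (le_max_right _ _))⟩
  | ldivR Pi A B hne h ih =>
    obtain ⟨n, p⟩ := ih; exact ⟨n+1, .ldivR n Pi A B hne p⟩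
  | rdivL G D A B C h1 h2 ih1 ih2 =>
    obtain ⟨n1, p1⟩ := ih1; obtain ⟨n2, p2⟩ := ih2
    exact ⟨max n1 n2 + 1, .rdivL _ G D A B C (p1.le_mono (le_max_left _ _))
      (p2.le_mono (le_max_right _ _))⟩
  | rdivR Pi A B hne h ih =>
    obtain ⟨n, p⟩ := ih; exact ⟨n+1, .rdivR n Pi A B hne p⟩
  | mulL G A B C h ih => obtain ⟨n, p⟩ := ih; exact ⟨n+1, .mulL n G A B C p⟩
  | mulR G D A B h1 h2 ih1 ih2 =>
    obtain ⟨n1, p1⟩ := ih1; obtain ⟨n2, p2⟩ := ih2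
    exact ⟨max n1 n2 + 1, .mulR _ G D A B (p1.le_mono (le_max_left _ _))
      (p2.le_mono (le_max_right _ _))⟩
  | diaL G i A B h ih => obtain ⟨n, p⟩ := ih; exact ⟨n+1, .diaL n G i A B p⟩
  | diaR G i A h ih => obtain ⟨n, p⟩ := ih; exact ⟨n+1, .diaR n G i A p⟩
  | boxL G i A B h ih => obtain ⟨n, p⟩ := ih; exact ⟨n+1, .boxL n G i A B p⟩
  | boxR G i A h ih => obtain ⟨n, p⟩ := ih; exact ⟨n+1, .boxR n G i A p⟩

theorem IProvCF.toProv : ∀ {G A}, IProvCF G A → IProv G A := by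
  intro G A h
  induction h with
  | id p => exact .id p
  | ldivL G D A B C h1 h2 ih1 ih2 => exact .ldivL G D A B C ih1 ih2
  | ldivR Pi A B hne h ih => exact .ldivR Pi A B hne ih
  | rdivL G D A B C h1 h2 ih1 ih2 => exact .rdivL G D A B C ih1 ih2
  | rdivR Pi A B hne h ih => exact .rdivR Pi A B hne ih
  | mulL G A B C h ih => exact .mulL G A B C ih
  | mulR G D A B h1 h2 ih1 ih2 => exact .mulR G D A B ih1 ih2
  | diaL G i A B h ih => exact .diaL G i A B ih
  | diaR G i A h ih => exact .diaR G i A ih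
  | boxL G i A B h ih => exact .boxL G i A B ih
  | boxR G i A h ih => exact .boxR G i A ih

/- ===================== Goodness (nonempty antecedents) ===================== -/

mutual
def goodT : ITree → Prop
  | .leaf _ => True
  | .node _ ts => ts ≠ [] ∧ goodL ts
def goodL : List ITree → Prop
  | [] => True
  | t :: ts => goodT t ∧ goodL ts
end

theorem goodL_append {a b : IHedge} (ha : goodL a) (hb : goodL b) : goodL (a ++ b) := by
  induction a with
  | nil => exact hb
  | cons t ts ih => exact ⟨ha.1, ih ha.2⟩

theorem goodL_append_inv {a b : IHedge} (h : goodL (a ++ b)) : goodL a ∧ goodL b := by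
  induction a with
  | nil => exact ⟨trivial, h⟩
  | cons t ts ih =>
    obtain ⟨h1, h2⟩ := ih h.2
    exact ⟨⟨h.1, h1⟩, h2⟩

theorem goodL_plug_inv {c : ICtx} {X : IHedge} (h : goodL (c.plug X)) : goodL X := by
  induction c generalizing X with
  | hole p q =>
    simp only [ICtx.plug] at h
    exact (goodL_append_inv (goodL_append_inv h).1).2
  | brk j c p q ih =>
    simp only [ICtx.plug] at h
    have := (goodL_append_inv h).2
    exact ih this.1.2

theorem goodL_plug_repl {c : ICtx} {X Y : IHedge} (h : goodL (c.plug X))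
    (hY : goodL Y) (hYne : Y ≠ []) : goodL (c.plug Y) := by
  induction c generalizing X Y with
  | hole p q =>
    simp only [ICtx.plug] at h ⊢
    obtain ⟨h1, h2⟩ := goodL_append_inv h
    exact goodL_append (goodL_append (goodL_append_inv h1).1 hY) h2
  | brk j c p q ih =>
    simp only [ICtx.plug] at h ⊢
    obtain ⟨h1, h2⟩ := goodL_append_inv h
    exact goodL_append h1 ⟨⟨plug_ne_nil hYne, ih h2.1.2 hY hYne⟩, h2.2⟩

theorem IPH.good : ∀ {n G A}, IPH n G A → G ≠ [] ∧ goodL G := by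
  intro n G A h
  induction h with
  | id n p => exact ⟨by simp, ⟨trivial, trivial⟩⟩
  | ldivL n G D A B C h1 h2 ih1 ih2 =>
    refine ⟨plug_ne_nil (by simp [ih1.1]), ?_⟩
    exact goodL_plug_repl ih2.2 (goodL_append ih1.2 ⟨trivial, trivial⟩) (by simp [ih1.1])
  | ldivR n Pi A B hne h ih => exact ⟨hne, ih.2.2⟩
  | rdivL n G D A B C h1 h2 ih1 ih2 =>
    refine ⟨plug_ne_nil (by simp), ?_⟩
    exact goodL_plug_repl ih2.2 ⟨trivial, ih1.2⟩ (by simp)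
  | rdivR n Pi A B hne h ih => exact ⟨hne, (goodL_append_inv ih.2).1⟩
  | mulL n G A B C h ih =>
    exact ⟨plug_ne_nil (by simp), goodL_plug_repl ih.2 ⟨trivial, trivial⟩ (by simp)⟩
  | mulR n G D A B h1 h2 ih1 ih2 =>
    exact ⟨by simp [ih1.1], goodL_append ih1.2 ih2.2⟩
  | diaL n G i A B h ih =>
    exact ⟨plug_ne_nil (by simp), goodL_plug_repl ih.2 ⟨trivial, trivial⟩ (by simp)⟩
  | diaR n G i A h ih => exact ⟨by simp, ⟨⟨ih.1, ih.2⟩, trivial⟩⟩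
  | boxL n G i A B h ih =>
    refine ⟨plug_ne_nil (by simp), ?_⟩
    exact goodL_plug_repl ih.2 ⟨⟨by simp, ⟨trivial, trivial⟩⟩, trivial⟩ (by simp)
  | boxR n G i A h ih =>
    have := ih.2
    exact ⟨this.1.1, this.1.2⟩

theorem IProvCF.ne_nil {G A} (h : IProvCF G A) : G ≠ [] := by
  obtain ⟨n, p⟩ := h.toIPH
  exact p.good.1

/-- Identity is admissible for all types. -/
theorem idA : ∀ A : ITy, IProvCF [.leaf A] A := by
  intro A
  induction A with
  | prim p => exact .id p
  | ldiv A B ihA ihB =>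
    refine .ldivR _ A B (by simp) ?_
    have := IProvCF.ldivL [.leaf A] (.hole [] []) A B B ihA (by simpa [ICtx.plug] using ihB)
    simpa [ICtx.plug] using this
  | rdiv B A ihB ihA =>
    refine .rdivR _ A B (by simp) ?_
    have := IProvCF.rdivL [.leaf A] (.hole [] []) A B B ihA (by simpa [ICtx.plug] using ihB)
    simpa [ICtx.plug] using this
  | mul A B ihA ihB =>
    have := IProvCF.mulL (.hole [] []) A B (.mul A B)
      (by simpa [ICtx.plug] using IProvCF.mulR [.leaf A] [.leaf B] A B ihA ihB)
    simpa [ICtx.plug] using this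
  | dia i A ih =>
    have := IProvCF.diaL (.hole [] []) i A (.dia i A)
      (by simpa [ICtx.plug] using IProvCF.diaR [.leaf A] i A ih)
    simpa [ICtx.plug] using this
  | box i A ih =>
    refine .boxR _ i A ?_
    have := IProvCF.boxL (.hole [] []) i A A (by simpa [ICtx.plug] using ih)
    simpa [ICtx.plug] using this
/- ===================== Cut admissibility ===================== -/

theorem lenTy_pos (A : ITy) : 1 ≤ lenTy A := by
  induction A <;> simp [lenTy] <;> omega

set_option maxHeartbeats 1000000 in
theorem cutAdm : ∀ (a : ℕ) (A : ITy), lenTy A ≤ a →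
    ∀ (N : ℕ), ∀ (n₁ n₂ : ℕ), n₁ + n₂ ≤ N →
    ∀ (G : IHedge) (D : ICtx) (B : ITy),
    IPH n₁ G A → IPH n₂ (D.plug [ITree.leaf A]) B → IProvCF (D.plug G) B := by
  intro a
  induction a using Nat.strong_induction_on with
  | _ a iha =>
  intro A hA N
  induction N using Nat.strong_induction_on with
  | _ N ihN =>
  intro n₁ n₂ hn G D B hL hR
  have recL : ∀ n₁' G', n₁' < n₁ → IPH n₁' G' A → IProvCF (D.plug G') B := by
    intro n₁' G' hlt h
    exact ihN (n₁' + n₂) (by omega) n₁' n₂ le_rfl G' D B h hR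
  generalize hS : D.plug [ITree.leaf A] = S at hR
  cases hR with
  | id n p =>
    rcases plug_eq_singleton (by simp) hS with ⟨hD, hAeq⟩ | ⟨j, d, hD, ht⟩
    · obtain rfl : A = .prim p := by simpa using hAeq
      subst hD
      simpa [ICtx.plug] using hL.toCF
    · simp at ht
  | ldivR n Pi A₁ B₁ hne h =>
    subst hS
    have h' : IPH n ((ICtx.comp (.hole [.leaf A₁] []) D).plug [.leaf A]) B₁ := by
      simpa [ICtx.plug] using h
    have step := ihN (n₁ + n) (by omega) n₁ n le_rfl G _ B₁ hL h'
    refine IProvCF.ldivR _ A₁ B₁ (plug_ne_nil hL.good.1) ?_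
    simpa [ICtx.plug] using step
  | rdivR n Pi A₁ B₁ hne h =>
    subst hS
    have h' : IPH n ((ICtx.comp (.hole [] [.leaf A₁]) D).plug [.leaf A]) B₁ := by
      simpa [ICtx.plug] using h
    have step := ihN (n₁ + n) (by omega) n₁ n le_rfl G _ B₁ hL h'
    refine IProvCF.rdivR _ A₁ B₁ (plug_ne_nil hL.good.1) ?_
    simpa [ICtx.plug] using step
  | mulR n G₁ G₂ A₁ B₁ h1 h2 =>
    rcases plug_eq_append (by simp) hS with ⟨c₁, hc, he⟩ | ⟨c₂, hc, he⟩ |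
      ⟨p, q, X₁, X₂, hX₁, hX₂, hDe, hX, hH1, hH2⟩
    · have h1' : IPH n (c₁.plug [.leaf A]) A₁ := by rw [hc]; exact h1
      have step := ihN (n₁ + n) (by omega) n₁ n le_rfl G c₁ A₁ hL h1'
      rw [he G]
      exact IProvCF.mulR _ G₂ A₁ B₁ step h2.toCF
    · have h2' : IPH n (c₂.plug [.leaf A]) B₁ := by rw [hc]; exact h2
      have step := ihN (n₁ + n) (by omega) n₁ n le_rfl G c₂ B₁ hL h2'
      rw [he G]
      exact IProvCF.mulR G₁ _ A₁ B₁ h1.toCF step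
    · exact (singleton_split hX₁ hX₂ hX.symm).elim
  | diaR n G₁ i A₁ h =>
    rcases plug_eq_node (by simp) hS with ⟨hD, hx⟩ | ⟨d, hD, hd⟩
    · simp at hx
    · subst hD
      have h' : IPH n (d.plug [.leaf A]) A₁ := by rw [hd]; exact h
      have step := ihN (n₁ + n) (by omega) n₁ n le_rfl G d A₁ hL h'
      have out := IProvCF.diaR (d.plug G) i A₁ step
      simpa [ICtx.plug] using out
  | boxR n G₁ i A₁ h =>
    subst hS
    have h' : IPH n ((ICtx.brk i D [] []).plug [.leaf A]) A₁ := by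
      simpa [ICtx.plug] using h
    have step := ihN (n₁ + n) (by omega) n₁ n le_rfl G _ A₁ hL h'
    refine IProvCF.boxR _ i A₁ ?_
    simpa [ICtx.plug] using step
  | ldivL n G₀ D₀ A₁ B₁ B h1 h2 =>
    rcases decomp D D₀ [.leaf A] (G₀ ++ [.leaf (.ldiv A₁ B₁)]) (by simp) (by simp) hS with
      ⟨K, hK, he⟩ | ⟨K, hK, he⟩ | ⟨c2, ⟨hD1, hD2⟩ | ⟨hD1, hD2⟩⟩ |
      ⟨K, X, Y, Z, hX, hY, hZ, ⟨e1, e2, e3, e4⟩ | ⟨e1, e2, e3, e4⟩⟩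
    · -- zone inside [leaf A]
      rcases plug_eq_singleton (by simp) hK with ⟨hKe, hZe⟩ | ⟨j, d, hKe, ht⟩
      · exfalso
        have hlen := congrArg List.length hZe
        simp only [List.length_append, List.length_cons, List.length_nil] at hlen
        exact h1.good.1 (List.length_eq_zero_iff.mp (by omega))
      · simp at ht
    · -- [leaf A] inside zone
      rcases plug_eq_append (by simp) hK with ⟨c₁, hc, he2⟩ | ⟨c₂, hc, he2⟩ |
        ⟨p, q, X₁, X₂, hX₁, hX₂, hDe, hX, hH1, hH2⟩
      · -- inside G₀ : cut into the left premise
        have h1' : IPH n (c₁.plug [.leaf A]) A₁ := by rw [hc]; exact h1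
        have step := ihN (n₁ + n) (by omega) n₁ n le_rfl G c₁ A₁ hL h1'
        have out := IProvCF.ldivL (c₁.plug G) D₀ A₁ B₁ B step h2.toCF
        rw [he G, he2 G]
        exact out
      · -- principal position
        rcases plug_eq_singleton (by simp) hc with ⟨hc₂, hAe⟩ | ⟨j, d, hc₂, ht⟩
        · obtain rfl : A = .ldiv A₁ B₁ := by simpa using hAe
          subst hc₂
          have hDe : ∀ X, D.plug X = D₀.plug (G₀ ++ X) := by
            intro X; rw [he X, he2 X]; simp [ICtx.plug]
          generalize hA' : ITy.ldiv A₁ B₁ = AA at hL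
          cases hL with
          | id n' p => simp at hA'
          | ldivR n' G A' B' hne hp =>
            obtain ⟨rfl, rfl⟩ : A₁ = A' ∧ B₁ = B' := by
              injection hA' with e1 e2; exact ⟨e1, e2⟩
            have hp' : IPH n' ((ICtx.hole [] G).plug [.leaf A₁]) B₁ := by
              simpa [ICtx.plug] using hp
            have hlt1 : lenTy A₁ < a := by
              have := lenTy_pos B₁; simp [lenTy] at hA; omega
            have c1 := iha (lenTy A₁) hlt1 A₁ le_rfl (n + n') n n' le_rfl
              G₀ (.hole [] G) B₁ h1 hp'
            have c1' : IProvCF (G₀ ++ G) B₁ := by simpa [ICtx.plug] using c1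
            obtain ⟨m, c1h⟩ := c1'.toIPH
            have hlt2 : lenTy B₁ < a := by
              have := lenTy_pos A₁; simp [lenTy] at hA; omega
            have c2res := iha (lenTy B₁) hlt2 B₁ le_rfl (m + n) m n le_rfl
              (G₀ ++ G) D₀ B c1h h2
            rw [hDe G]
            exact c2res
          | rdivR n' Pi A' B' hne hp => simp at hA'
          | mulR n' G1' G2' A' B' p1 p2 => simp at hA'
          | diaR n' G1' i' A' p => simp at hA'
          | boxR n' G1' i' A' p => simp at hA'
          | ldivL m G0' D1 A' B' C' p1 p2 =>
            subst hA'
            have step' : IProvCF ((D.comp D1).plug [.leaf B']) B := by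
              simpa using recL m (D1.plug [.leaf B']) (by omega) p2
            simpa using IProvCF.ldivL G0' (D.comp D1) A' B' B p1.toCF step'
          | rdivL m G0' D1 A' B' C' p1 p2 =>
            subst hA'
            have step' : IProvCF ((D.comp D1).plug [.leaf B']) B := by
              simpa using recL m (D1.plug [.leaf B']) (by omega) p2
            simpa using IProvCF.rdivL G0' (D.comp D1) A' B' B p1.toCF step'
          | mulL m G1' A' B' C' p =>
            subst hA'
            have step' : IProvCF ((D.comp G1').plug [.leaf A', .leaf B']) B := by
              simpa using recL m (G1'.plug [.leaf A', .leaf B']) (by omega) p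
            simpa using IProvCF.mulL (D.comp G1') A' B' B step'
          | diaL m G1' i' A' C' p =>
            subst hA'
            have step' : IProvCF ((D.comp G1').plug [.node i' [.leaf A']]) B := by
              simpa using recL m (G1'.plug [.node i' [.leaf A']]) (by omega) p
            simpa using IProvCF.diaL (D.comp G1') i' A' B step'
          | boxL m G1' i' A' C' p =>
            subst hA'
            have step' : IProvCF ((D.comp G1').plug [.leaf A']) B := by
              simpa using recL m (G1'.plug [.leaf A']) (by omega) p
            simpa using IProvCF.boxL (D.comp G1') i' A' B step'
        · simp at ht
      · exact (singleton_split hX₁ hX₂ hX.symm).elim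
    · -- disjoint, orientation 1 : D = fill2 c2 zone, D₀ = fill1 c2 [leaf A]
      have h2' : IPH n ((ICtx2.fill2 c2 [.leaf B₁]).plug [.leaf A]) B := by
        rw [← ICtx2.swap, ← hD2]; exact h2
      have step := ihN (n₁ + n) (by omega) n₁ n le_rfl G _ B hL h2'
      have step' : IProvCF ((ICtx2.fill1 c2 G).plug [.leaf B₁]) B := by
        rw [ICtx2.swap]; exact step
      have out := IProvCF.ldivL G₀ (ICtx2.fill1 c2 G) A₁ B₁ B h1.toCF step'
      rw [hD1, ← ICtx2.swap]
      exact out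
    · -- disjoint, orientation 2 : D = fill1 c2 zone, D₀ = fill2 c2 [leaf A]
      have h2' : IPH n ((ICtx2.fill1 c2 [.leaf B₁]).plug [.leaf A]) B := by
        rw [ICtx2.swap, ← hD2]; exact h2
      have step := ihN (n₁ + n) (by omega) n₁ n le_rfl G _ B hL h2'
      have step' : IProvCF ((ICtx2.fill2 c2 G).plug [.leaf B₁]) B := by
        rw [← ICtx2.swap]; exact step
      have out := IProvCF.ldivL G₀ (ICtx2.fill2 c2 G) A₁ B₁ B h1.toCF step'
      rw [hD1, ICtx2.swap]
      exact out
    · exact (singleton_split hX hY e1.symm).elim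
    · exact (singleton_split hY hZ e2.symm).elim
  | rdivL n G₀ D₀ A₁ B₁ B h1 h2 =>
    have hS' : D.plug [ITree.leaf A] = D₀.plug ([.leaf (.rdiv B₁ A₁)] ++ G₀) := by
      simpa using hS
    rcases decomp D D₀ [.leaf A] ([.leaf (.rdiv B₁ A₁)] ++ G₀) (by simp) (by simp) hS' with
      ⟨K, hK, he⟩ | ⟨K, hK, he⟩ | ⟨c2, ⟨hD1, hD2⟩ | ⟨hD1, hD2⟩⟩ |
      ⟨K, X, Y, Z, hX, hY, hZ, ⟨e1, e2, e3, e4⟩ | ⟨e1, e2, e3, e4⟩⟩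
    · rcases plug_eq_singleton (by simp) hK with ⟨hKe, hZe⟩ | ⟨j, d, hKe, ht⟩
      · exfalso
        have hlen := congrArg List.length hZe
        simp only [List.length_append, List.length_cons, List.length_nil] at hlen
        exact h1.good.1 (List.length_eq_zero_iff.mp (by omega))
      · simp at ht
    · rcases plug_eq_append (by simp) hK with ⟨c₁, hc, he2⟩ | ⟨c₂, hc, he2⟩ |
        ⟨p, q, X₁, X₂, hX₁, hX₂, hDe, hX, hH1, hH2⟩
      · -- [leaf A] inside the [leaf rdiv] part : principal
        rcases plug_eq_singleton (by simp) hc with ⟨hc₁, hAe⟩ | ⟨j, d, hc₁, ht⟩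
        · obtain rfl : A = .rdiv B₁ A₁ := by simpa using hAe
          subst hc₁
          have hDe : ∀ X, D.plug X = D₀.plug (X ++ G₀) := by
            intro X; rw [he X, he2 X]; simp [ICtx.plug]
          generalize hA' : ITy.rdiv B₁ A₁ = AA at hL
          cases hL with
          | id n' p => simp at hA'
          | rdivR n' G A' B' hne hp =>
            obtain ⟨rfl, rfl⟩ : B₁ = B' ∧ A₁ = A' := by
              injection hA' with e1 e2; exact ⟨e1, e2⟩
            have hp' : IPH n' ((ICtx.hole G []).plug [.leaf A₁]) B₁ := by
              simpa [ICtx.plug] using hp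
            have hlt1 : lenTy A₁ < a := by
              have := lenTy_pos B₁; simp [lenTy] at hA; omega
            have c1 := iha (lenTy A₁) hlt1 A₁ le_rfl (n + n') n n' le_rfl
              G₀ (.hole G []) B₁ h1 hp'
            have c1' : IProvCF (G ++ G₀) B₁ := by simpa [ICtx.plug] using c1
            obtain ⟨m, c1h⟩ := c1'.toIPH
            have hlt2 : lenTy B₁ < a := by
              have := lenTy_pos A₁; simp [lenTy] at hA; omega
            have c2res := iha (lenTy B₁) hlt2 B₁ le_rfl (m + n) m n le_rfl
              (G ++ G₀) D₀ B c1h h2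
            rw [hDe G]
            exact c2res
          | ldivR n' Pi A' B' hne hp => simp at hA'
          | mulR n' G1' G2' A' B' p1 p2 => simp at hA'
          | diaR n' G1' i' A' p => simp at hA'
          | boxR n' G1' i' A' p => simp at hA'
          | ldivL m G0' D1 A' B' C' p1 p2 =>
            subst hA'
            have step' : IProvCF ((D.comp D1).plug [.leaf B']) B := by
              simpa using recL m (D1.plug [.leaf B']) (by omega) p2
            simpa using IProvCF.ldivL G0' (D.comp D1) A' B' B p1.toCF step'
          | rdivL m G0' D1 A' B' C' p1 p2 =>
            subst hA'
            have step' : IProvCF ((D.comp D1).plug [.leaf B']) B := by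
              simpa using recL m (D1.plug [.leaf B']) (by omega) p2
            simpa using IProvCF.rdivL G0' (D.comp D1) A' B' B p1.toCF step'
          | mulL m G1' A' B' C' p =>
            subst hA'
            have step' : IProvCF ((D.comp G1').plug [.leaf A', .leaf B']) B := by
              simpa using recL m (G1'.plug [.leaf A', .leaf B']) (by omega) p
            simpa using IProvCF.mulL (D.comp G1') A' B' B step'
          | diaL m G1' i' A' C' p =>
            subst hA'
            have step' : IProvCF ((D.comp G1').plug [.node i' [.leaf A']]) B := by
              simpa using recL m (G1'.plug [.node i' [.leaf A']]) (by omega) p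
            simpa using IProvCF.diaL (D.comp G1') i' A' B step'
          | boxL m G1' i' A' C' p =>
            subst hA'
            have step' : IProvCF ((D.comp G1').plug [.leaf A']) B := by
              simpa using recL m (G1'.plug [.leaf A']) (by omega) p
            simpa using IProvCF.boxL (D.comp G1') i' A' B step'
        · simp at ht
      · -- inside G₀ : cut into the left premise
        have h1' : IPH n (c₂.plug [.leaf A]) A₁ := by rw [hc]; exact h1
        have step := ihN (n₁ + n) (by omega) n₁ n le_rfl G c₂ A₁ hL h1'
        have out := IProvCF.rdivL (c₂.plug G) D₀ A₁ B₁ B step h2.toCF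
        rw [he G, he2 G]
        simpa using out
      · exact (singleton_split hX₁ hX₂ hX.symm).elim
    · have h2' : IPH n ((ICtx2.fill2 c2 [.leaf B₁]).plug [.leaf A]) B := by
        rw [← ICtx2.swap, ← hD2]; exact h2
      have step := ihN (n₁ + n) (by omega) n₁ n le_rfl G _ B hL h2'
      have step' : IProvCF ((ICtx2.fill1 c2 G).plug [.leaf B₁]) B := by
        rw [ICtx2.swap]; exact step
      have out := IProvCF.rdivL G₀ (ICtx2.fill1 c2 G) A₁ B₁ B h1.toCF step'
      rw [hD1, ← ICtx2.swap]
      simpa using out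
    · have h2' : IPH n ((ICtx2.fill1 c2 [.leaf B₁]).plug [.leaf A]) B := by
        rw [ICtx2.swap, ← hD2]; exact h2
      have step := ihN (n₁ + n) (by omega) n₁ n le_rfl G _ B hL h2'
      have step' : IProvCF ((ICtx2.fill2 c2 G).plug [.leaf B₁]) B := by
        rw [← ICtx2.swap]; exact step
      have out := IProvCF.rdivL G₀ (ICtx2.fill2 c2 G) A₁ B₁ B h1.toCF step'
      rw [hD1, ICtx2.swap]
      simpa using out
    · exact (singleton_split hX hY e1.symm).elim
    · exact (singleton_split hY hZ e2.symm).elim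
  | mulL n G₁ A₁ B₁ B h =>
    rcases decomp D G₁ [.leaf A] [.leaf (.mul A₁ B₁)] (by simp) (by simp) hS with
      ⟨K, hK, he⟩ | ⟨K, hK, he⟩ | ⟨c2, ⟨hD1, hD2⟩ | ⟨hD1, hD2⟩⟩ |
      ⟨K, X, Y, Z, hX, hY, hZ, ⟨e1, e2, e3, e4⟩ | ⟨e1, e2, e3, e4⟩⟩
    · rcases plug_eq_singleton (by simp) hK with ⟨hKe, hZe⟩ | ⟨j, d, hKe, ht⟩
      · obtain rfl : A = .mul A₁ B₁ := by simpa using hZe.symm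
        subst hKe
        have hDe : ∀ X, D.plug X = G₁.plug X := by
          intro X; rw [he X]; simp [ICtx.plug]
        generalize hA' : ITy.mul A₁ B₁ = AA at hL
        cases hL with
        | id n' p => simp at hA'
        | mulR n' G1' G2' A' B' p1 p2 =>
          obtain ⟨rfl, rfl⟩ : A₁ = A' ∧ B₁ = B' := by
            injection hA' with e1 e2; exact ⟨e1, e2⟩
          have h' : IPH n ((G₁.comp (.hole [] [.leaf B₁])).plug [.leaf A₁]) B := by
            simpa [ICtx.plug] using h
          have hlt1 : lenTy A₁ < a := by
            have := lenTy_pos B₁; simp [lenTy] at hA; omega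
          have c1 := iha (lenTy A₁) hlt1 A₁ le_rfl (n' + n) n' n le_rfl
            G1' (G₁.comp (.hole [] [.leaf B₁])) B p1 h'
          have c1' : IProvCF (G₁.plug (G1' ++ [.leaf B₁])) B := by
            simpa [ICtx.plug] using c1
          obtain ⟨m, c1h⟩ := c1'.toIPH
          have c1h' : IPH m ((G₁.comp (.hole G1' [])).plug [.leaf B₁]) B := by
            simpa [ICtx.plug] using c1h
          have hlt2 : lenTy B₁ < a := by
            have := lenTy_pos A₁; simp [lenTy] at hA; omega
          have c2res := iha (lenTy B₁) hlt2 B₁ le_rfl (n' + m) n' m le_rfl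
            G2' (G₁.comp (.hole G1' [])) B p2 c1h'
          rw [hDe (G1' ++ G2')]
          simpa [ICtx.plug] using c2res
        | ldivR n' Pi A' B' hne hp => simp at hA'
        | rdivR n' Pi A' B' hne hp => simp at hA'
        | diaR n' G1' i' A' p => simp at hA'
        | boxR n' G1' i' A' p => simp at hA'
        | ldivL m G0' D1 A' B' C' p1 p2 =>
          subst hA'
          have step' : IProvCF ((D.comp D1).plug [.leaf B']) B := by
            simpa using recL m (D1.plug [.leaf B']) (by omega) p2
          simpa using IProvCF.ldivL G0' (D.comp D1) A' B' B p1.toCF step'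
        | rdivL m G0' D1 A' B' C' p1 p2 =>
          subst hA'
          have step' : IProvCF ((D.comp D1).plug [.leaf B']) B := by
            simpa using recL m (D1.plug [.leaf B']) (by omega) p2
          simpa using IProvCF.rdivL G0' (D.comp D1) A' B' B p1.toCF step'
        | mulL m G1' A' B' C' p =>
          subst hA'
          have step' : IProvCF ((D.comp G1').plug [.leaf A', .leaf B']) B := by
            simpa using recL m (G1'.plug [.leaf A', .leaf B']) (by omega) p
          simpa using IProvCF.mulL (D.comp G1') A' B' B step'
        | diaL m G1' i' A' C' p =>
          subst hA'
          have step' : IProvCF ((D.comp G1').plug [.node i' [.leaf A']]) B := by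
            simpa using recL m (G1'.plug [.node i' [.leaf A']]) (by omega) p
          simpa using IProvCF.diaL (D.comp G1') i' A' B step'
        | boxL m G1' i' A' C' p =>
          subst hA'
          have step' : IProvCF ((D.comp G1').plug [.leaf A']) B := by
            simpa using recL m (G1'.plug [.leaf A']) (by omega) p
          simpa using IProvCF.boxL (D.comp G1') i' A' B step'
      · simp at ht
    · rcases plug_eq_singleton (by simp) hK with ⟨hKe, hAe⟩ | ⟨j, d, hKe, ht⟩
      · obtain rfl : A = .mul A₁ B₁ := by simpa using hAe
        subst hKe
        have hDe : ∀ X, D.plug X = G₁.plug X := by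
          intro X; rw [he X]; simp [ICtx.plug]
        generalize hA' : ITy.mul A₁ B₁ = AA at hL
        cases hL with
        | id n' p => simp at hA'
        | mulR n' G1' G2' A' B' p1 p2 =>
          obtain ⟨rfl, rfl⟩ : A₁ = A' ∧ B₁ = B' := by
            injection hA' with e1 e2; exact ⟨e1, e2⟩
          have h' : IPH n ((G₁.comp (.hole [] [.leaf B₁])).plug [.leaf A₁]) B := by
            simpa [ICtx.plug] using h
          have hlt1 : lenTy A₁ < a := by
            have := lenTy_pos B₁; simp [lenTy] at hA; omega
          have c1 := iha (lenTy A₁) hlt1 A₁ le_rfl (n' + n) n' n le_rfl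
            G1' (G₁.comp (.hole [] [.leaf B₁])) B p1 h'
          have c1' : IProvCF (G₁.plug (G1' ++ [.leaf B₁])) B := by
            simpa [ICtx.plug] using c1
          obtain ⟨m, c1h⟩ := c1'.toIPH
          have c1h' : IPH m ((G₁.comp (.hole G1' [])).plug [.leaf B₁]) B := by
            simpa [ICtx.plug] using c1h
          have hlt2 : lenTy B₁ < a := by
            have := lenTy_pos A₁; simp [lenTy] at hA; omega
          have c2res := iha (lenTy B₁) hlt2 B₁ le_rfl (n' + m) n' m le_rfl
            G2' (G₁.comp (.hole G1' [])) B p2 c1h'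
          rw [hDe (G1' ++ G2')]
          simpa [ICtx.plug] using c2res
        | ldivR n' Pi A' B' hne hp => simp at hA'
        | rdivR n' Pi A' B' hne hp => simp at hA'
        | diaR n' G1' i' A' p => simp at hA'
        | boxR n' G1' i' A' p => simp at hA'
        | ldivL m G0' D1 A' B' C' p1 p2 =>
          subst hA'
          have step' : IProvCF ((D.comp D1).plug [.leaf B']) B := by
            simpa using recL m (D1.plug [.leaf B']) (by omega) p2
          simpa using IProvCF.ldivL G0' (D.comp D1) A' B' B p1.toCF step'
        | rdivL m G0' D1 A' B' C' p1 p2 =>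
          subst hA'
          have step' : IProvCF ((D.comp D1).plug [.leaf B']) B := by
            simpa using recL m (D1.plug [.leaf B']) (by omega) p2
          simpa using IProvCF.rdivL G0' (D.comp D1) A' B' B p1.toCF step'
        | mulL m G1' A' B' C' p =>
          subst hA'
          have step' : IProvCF ((D.comp G1').plug [.leaf A', .leaf B']) B := by
            simpa using recL m (G1'.plug [.leaf A', .leaf B']) (by omega) p
          simpa using IProvCF.mulL (D.comp G1') A' B' B step'
        | diaL m G1' i' A' C' p =>
          subst hA'
          have step' : IProvCF ((D.comp G1').plug [.node i' [.leaf A']]) B := by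
            simpa using recL m (G1'.plug [.node i' [.leaf A']]) (by omega) p
          simpa using IProvCF.diaL (D.comp G1') i' A' B step'
        | boxL m G1' i' A' C' p =>
          subst hA'
          have step' : IProvCF ((D.comp G1').plug [.leaf A']) B := by
            simpa using recL m (G1'.plug [.leaf A']) (by omega) p
          simpa using IProvCF.boxL (D.comp G1') i' A' B step'
      · simp at ht
    · -- disjoint, orientation 1 : D = fill2 c2 zone, G₁ = fill1 c2 [leaf A]
      have h' : IPH n ((ICtx2.fill2 c2 [.leaf A₁, .leaf B₁]).plug [.leaf A]) B := by
        rw [← ICtx2.swap, ← hD2]; exact h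
      have step := ihN (n₁ + n) (by omega) n₁ n le_rfl G _ B hL h'
      have step' : IProvCF ((ICtx2.fill1 c2 G).plug [.leaf A₁, .leaf B₁]) B := by
        rw [ICtx2.swap]; exact step
      have out := IProvCF.mulL (ICtx2.fill1 c2 G) A₁ B₁ B step'
      rw [hD1, ← ICtx2.swap]
      exact out
    · have h' : IPH n ((ICtx2.fill1 c2 [.leaf A₁, .leaf B₁]).plug [.leaf A]) B := by
        rw [ICtx2.swap, ← hD2]; exact h
      have step := ihN (n₁ + n) (by omega) n₁ n le_rfl G _ B hL h'
      have step' : IProvCF ((ICtx2.fill2 c2 G).plug [.leaf A₁, .leaf B₁]) B := by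
        rw [← ICtx2.swap]; exact step
      have out := IProvCF.mulL (ICtx2.fill2 c2 G) A₁ B₁ B step'
      rw [hD1, ICtx2.swap]
      exact out
    · exact (singleton_split hX hY e1.symm).elim
    · exact (singleton_split hY hZ e2.symm).elim
  | diaL n G₁ i A₁ B h =>
    rcases decomp D G₁ [.leaf A] [.leaf (.dia i A₁)] (by simp) (by simp) hS with
      ⟨K, hK, he⟩ | ⟨K, hK, he⟩ | ⟨c2, ⟨hD1, hD2⟩ | ⟨hD1, hD2⟩⟩ |
      ⟨K, X, Y, Z, hX, hY, hZ, ⟨e1, e2, e3, e4⟩ | ⟨e1, e2, e3, e4⟩⟩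
    · rcases plug_eq_singleton (by simp) hK with ⟨hKe, hZe⟩ | ⟨j, d, hKe, ht⟩
      · obtain rfl : A = .dia i A₁ := by simpa using hZe.symm
        subst hKe
        have hDe : ∀ X, D.plug X = G₁.plug X := by
          intro X; rw [he X]; simp [ICtx.plug]
        generalize hA' : ITy.dia i A₁ = AA at hL
        cases hL with
        | id n' p => simp at hA'
        | diaR n' G1' i' A' p =>
          obtain ⟨rfl, rfl⟩ : i = i' ∧ A₁ = A' := by
            injection hA' with e1 e2; exact ⟨e1, e2⟩
          have h' : IPH n ((G₁.comp (.brk i (.hole [] []) [] [])).plug [.leaf A₁]) B := by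
            simpa [ICtx.plug] using h
          have hlt1 : lenTy A₁ < a := by simp [lenTy] at hA; omega
          have cres := iha (lenTy A₁) hlt1 A₁ le_rfl (n' + n) n' n le_rfl
            G1' (G₁.comp (.brk i (.hole [] []) [] [])) B p h'
          rw [hDe [ITree.node i G1']]
          simpa [ICtx.plug] using cres
        | ldivR n' Pi A' B' hne hp => simp at hA'
        | rdivR n' Pi A' B' hne hp => simp at hA'
        | mulR n' G1' G2' A' B' p1 p2 => simp at hA'
        | boxR n' G1' i' A' p => simp at hA'
        | ldivL m G0' D1 A' B' C' p1 p2 =>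
          subst hA'
          have step' : IProvCF ((D.comp D1).plug [.leaf B']) B := by
            simpa using recL m (D1.plug [.leaf B']) (by omega) p2
          simpa using IProvCF.ldivL G0' (D.comp D1) A' B' B p1.toCF step'
        | rdivL m G0' D1 A' B' C' p1 p2 =>
          subst hA'
          have step' : IProvCF ((D.comp D1).plug [.leaf B']) B := by
            simpa using recL m (D1.plug [.leaf B']) (by omega) p2
          simpa using IProvCF.rdivL G0' (D.comp D1) A' B' B p1.toCF step'
        | mulL m G1' A' B' C' p =>
          subst hA'
          have step' : IProvCF ((D.comp G1').plug [.leaf A', .leaf B']) B := by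
            simpa using recL m (G1'.plug [.leaf A', .leaf B']) (by omega) p
          simpa using IProvCF.mulL (D.comp G1') A' B' B step'
        | diaL m G1' i' A' C' p =>
          subst hA'
          have step' : IProvCF ((D.comp G1').plug [.node i' [.leaf A']]) B := by
            simpa using recL m (G1'.plug [.node i' [.leaf A']]) (by omega) p
          simpa using IProvCF.diaL (D.comp G1') i' A' B step'
        | boxL m G1' i' A' C' p =>
          subst hA'
          have step' : IProvCF ((D.comp G1').plug [.leaf A']) B := by
            simpa using recL m (G1'.plug [.leaf A']) (by omega) p
          simpa using IProvCF.boxL (D.comp G1') i' A' B step'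
      · simp at ht
    · rcases plug_eq_singleton (by simp) hK with ⟨hKe, hAe⟩ | ⟨j, d, hKe, ht⟩
      · obtain rfl : A = .dia i A₁ := by simpa using hAe
        subst hKe
        have hDe : ∀ X, D.plug X = G₁.plug X := by
          intro X; rw [he X]; simp [ICtx.plug]
        generalize hA' : ITy.dia i A₁ = AA at hL
        cases hL with
        | id n' p => simp at hA'
        | diaR n' G1' i' A' p =>
          obtain ⟨rfl, rfl⟩ : i = i' ∧ A₁ = A' := by
            injection hA' with e1 e2; exact ⟨e1, e2⟩
          have h' : IPH n ((G₁.comp (.brk i (.hole [] []) [] [])).plug [.leaf A₁]) B := by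
            simpa [ICtx.plug] using h
          have hlt1 : lenTy A₁ < a := by simp [lenTy] at hA; omega
          have cres := iha (lenTy A₁) hlt1 A₁ le_rfl (n' + n) n' n le_rfl
            G1' (G₁.comp (.brk i (.hole [] []) [] [])) B p h'
          rw [hDe [ITree.node i G1']]
          simpa [ICtx.plug] using cres
        | ldivR n' Pi A' B' hne hp => simp at hA'
        | rdivR n' Pi A' B' hne hp => simp at hA'
        | mulR n' G1' G2' A' B' p1 p2 => simp at hA'
        | boxR n' G1' i' A' p => simp at hA'
        | ldivL m G0' D1 A' B' C' p1 p2 =>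
          subst hA'
          have step' : IProvCF ((D.comp D1).plug [.leaf B']) B := by
            simpa using recL m (D1.plug [.leaf B']) (by omega) p2
          simpa using IProvCF.ldivL G0' (D.comp D1) A' B' B p1.toCF step'
        | rdivL m G0' D1 A' B' C' p1 p2 =>
          subst hA'
          have step' : IProvCF ((D.comp D1).plug [.leaf B']) B := by
            simpa using recL m (D1.plug [.leaf B']) (by omega) p2
          simpa using IProvCF.rdivL G0' (D.comp D1) A' B' B p1.toCF step'
        | mulL m G1' A' B' C' p =>
          subst hA'
          have step' : IProvCF ((D.comp G1').plug [.leaf A', .leaf B']) B := by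
            simpa using recL m (G1'.plug [.leaf A', .leaf B']) (by omega) p
          simpa using IProvCF.mulL (D.comp G1') A' B' B step'
        | diaL m G1' i' A' C' p =>
          subst hA'
          have step' : IProvCF ((D.comp G1').plug [.node i' [.leaf A']]) B := by
            simpa using recL m (G1'.plug [.node i' [.leaf A']]) (by omega) p
          simpa using IProvCF.diaL (D.comp G1') i' A' B step'
        | boxL m G1' i' A' C' p =>
          subst hA'
          have step' : IProvCF ((D.comp G1').plug [.leaf A']) B := by
            simpa using recL m (G1'.plug [.leaf A']) (by omega) p
          simpa using IProvCF.boxL (D.comp G1') i' A' B step'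
      · simp at ht
    · have h' : IPH n ((ICtx2.fill2 c2 [.node i [.leaf A₁]]).plug [.leaf A]) B := by
        rw [← ICtx2.swap, ← hD2]; exact h
      have step := ihN (n₁ + n) (by omega) n₁ n le_rfl G _ B hL h'
      have step' : IProvCF ((ICtx2.fill1 c2 G).plug [.node i [.leaf A₁]]) B := by
        rw [ICtx2.swap]; exact step
      have out := IProvCF.diaL (ICtx2.fill1 c2 G) i A₁ B step'
      rw [hD1, ← ICtx2.swap]
      exact out
    · have h' : IPH n ((ICtx2.fill1 c2 [.node i [.leaf A₁]]).plug [.leaf A]) B := by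
        rw [ICtx2.swap, ← hD2]; exact h
      have step := ihN (n₁ + n) (by omega) n₁ n le_rfl G _ B hL h'
      have step' : IProvCF ((ICtx2.fill2 c2 G).plug [.node i [.leaf A₁]]) B := by
        rw [← ICtx2.swap]; exact step
      have out := IProvCF.diaL (ICtx2.fill2 c2 G) i A₁ B step'
      rw [hD1, ICtx2.swap]
      exact out
    · exact (singleton_split hX hY e1.symm).elim
    · exact (singleton_split hY hZ e2.symm).elim
  | boxL n G₁ i A₁ B h =>
    rcases decomp D G₁ [.leaf A] [.node i [.leaf (.box i A₁)]] (by simp) (by simp) hS with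
      ⟨K, hK, he⟩ | ⟨K, hK, he⟩ | ⟨c2, ⟨hD1, hD2⟩ | ⟨hD1, hD2⟩⟩ |
      ⟨K, X, Y, Z, hX, hY, hZ, ⟨e1, e2, e3, e4⟩ | ⟨e1, e2, e3, e4⟩⟩
    · rcases plug_eq_singleton (by simp) hK with ⟨hKe, hZe⟩ | ⟨j, d, hKe, ht⟩
      · simp at hZe
      · simp at ht
    · rcases plug_eq_node (by simp) hK with ⟨hKe, hAe⟩ | ⟨d, hKe, hd⟩
      · simp at hAe
      · rcases plug_eq_singleton (by simp) hd with ⟨hde, hAe⟩ | ⟨j, d', hde, ht⟩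
        · obtain rfl : A = .box i A₁ := by simpa using hAe
          subst hde; subst hKe
          have hDe : ∀ X, D.plug X = G₁.plug [.node i X] := by
            intro X; rw [he X]; simp [ICtx.plug]
          generalize hA' : ITy.box i A₁ = AA at hL
          cases hL with
          | id n' p => simp at hA'
          | boxR n' G i' A' p =>
            obtain ⟨rfl, rfl⟩ : i = i' ∧ A₁ = A' := by
              injection hA' with e1 e2; exact ⟨e1, e2⟩
            have hlt1 : lenTy A₁ < a := by simp [lenTy] at hA; omega
            have cres := iha (lenTy A₁) hlt1 A₁ le_rfl (n' + n) n' n le_rfl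
              [ITree.node i G] G₁ B p h
            rw [hDe G]
            exact cres
          | ldivR n' Pi A' B' hne hp => simp at hA'
          | rdivR n' Pi A' B' hne hp => simp at hA'
          | mulR n' G1' G2' A' B' p1 p2 => simp at hA'
          | diaR n' G1' i' A' p => simp at hA'
          | ldivL m G0' D1 A' B' C' p1 p2 =>
            subst hA'
            have step' : IProvCF ((D.comp D1).plug [.leaf B']) B := by
              simpa using recL m (D1.plug [.leaf B']) (by omega) p2
            simpa using IProvCF.ldivL G0' (D.comp D1) A' B' B p1.toCF step'
          | rdivL m G0' D1 A' B' C' p1 p2 =>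
            subst hA'
            have step' : IProvCF ((D.comp D1).plug [.leaf B']) B := by
              simpa using recL m (D1.plug [.leaf B']) (by omega) p2
            simpa using IProvCF.rdivL G0' (D.comp D1) A' B' B p1.toCF step'
          | mulL m G1' A' B' C' p =>
            subst hA'
            have step' : IProvCF ((D.comp G1').plug [.leaf A', .leaf B']) B := by
              simpa using recL m (G1'.plug [.leaf A', .leaf B']) (by omega) p
            simpa using IProvCF.mulL (D.comp G1') A' B' B step'
          | diaL m G1' i' A' C' p =>
            subst hA'
            have step' : IProvCF ((D.comp G1').plug [.node i' [.leaf A']]) B := by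
              simpa using recL m (G1'.plug [.node i' [.leaf A']]) (by omega) p
            simpa using IProvCF.diaL (D.comp G1') i' A' B step'
          | boxL m G1' i' A' C' p =>
            subst hA'
            have step' : IProvCF ((D.comp G1').plug [.leaf A']) B := by
              simpa using recL m (G1'.plug [.leaf A']) (by omega) p
            simpa using IProvCF.boxL (D.comp G1') i' A' B step'
        · simp at ht
    · have h' : IPH n ((ICtx2.fill2 c2 [.leaf A₁]).plug [.leaf A]) B := by
        rw [← ICtx2.swap, ← hD2]; exact h
      have step := ihN (n₁ + n) (by omega) n₁ n le_rfl G _ B hL h'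
      have step' : IProvCF ((ICtx2.fill1 c2 G).plug [.leaf A₁]) B := by
        rw [ICtx2.swap]; exact step
      have out := IProvCF.boxL (ICtx2.fill1 c2 G) i A₁ B step'
      rw [hD1, ← ICtx2.swap]
      exact out
    · have h' : IPH n ((ICtx2.fill1 c2 [.leaf A₁]).plug [.leaf A]) B := by
        rw [ICtx2.swap, ← hD2]; exact h
      have step := ihN (n₁ + n) (by omega) n₁ n le_rfl G _ B hL h'
      have step' : IProvCF ((ICtx2.fill2 c2 G).plug [.leaf A₁]) B := by
        rw [← ICtx2.swap]; exact step
      have out := IProvCF.boxL (ICtx2.fill2 c2 G) i A₁ B step'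
      rw [hD1, ICtx2.swap]
      exact out
    · exact (singleton_split hX hY e1.symm).elim
    · exact (singleton_split hY hZ e2.symm).elim
/- ===================== Cut elimination ===================== -/

theorem IProv.toCF : ∀ {G A}, IProv G A → IProvCF G A := by
  intro G A h
  induction h with
  | id p => exact .id p
  | ldivL G D A B C h1 h2 ih1 ih2 => exact .ldivL G D A B C ih1 ih2
  | ldivR Pi A B hne h ih => exact .ldivR Pi A B hne ih
  | rdivL G D A B C h1 h2 ih1 ih2 => exact .rdivL G D A B C ih1 ih2
  | rdivR Pi A B hne h ih => exact .rdivR Pi A B hne ih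
  | mulL G A B C h ih => exact .mulL G A B C ih
  | mulR G D A B h1 h2 ih1 ih2 => exact .mulR G D A B ih1 ih2
  | diaL G i A B h ih => exact .diaL G i A B ih
  | diaR G i A h ih => exact .diaR G i A ih
  | boxL G i A B h ih => exact .boxL G i A B ih
  | boxR G i A h ih => exact .boxR G i A ih
  | cut G D A B h1 h2 ih1 ih2 =>
    obtain ⟨n₁, p1⟩ := ih1.toIPH
    obtain ⟨n₂, p2⟩ := ih2.toIPH
    exact cutAdm (lenTy A) A le_rfl (n₁ + n₂) n₁ n₂ le_rfl G D B p1 p2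

/- ===================== Counting simp lemmas ===================== -/

@[simp] theorem sigmaTree_leaf (i : ℕ) (A : ITy) :
    sigmaTree i (ITree.leaf A) = sigmaTy i A := rfl
@[simp] theorem sigmaTree_node (i j : ℕ) (ts : List ITree) :
    sigmaTree i (ITree.node j ts) = sigmaHedge i ts := rfl
@[simp] theorem tauTree_leaf (i : ℕ) (A : ITy) :
    tauTree i (ITree.leaf A) = tauTy i A := rfl
@[simp] theorem tauTree_node (i j : ℕ) (ts : List ITree) :
    tauTree i (ITree.node j ts) = (if j = i then 1 else 0) + tauHedge i ts := rfl

@[simp] theorem sigmaCtx_comp (i : ℕ) (c K : ICtx) :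
    sigmaCtx i (c.comp K) = sigmaCtx i c + sigmaCtx i K := by
  induction c with
  | hole p q => cases K <;> simp [ICtx.comp, sigmaCtx] <;> omega
  | brk j c p q ih => simp [ICtx.comp, sigmaCtx, ih] <;> omega

@[simp] theorem tauCtx_comp (i : ℕ) (c K : ICtx) :
    tauCtx i (c.comp K) = tauCtx i c + tauCtx i K := by
  induction c with
  | hole p q => cases K <;> simp [ICtx.comp, tauCtx] <;> omega
  | brk j c p q ih => simp [ICtx.comp, tauCtx, ih] <;> omega
/- ===================== Interpolation (cut-free) ===================== -/

attribute [simp] ICtx2.swap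

set_option maxHeartbeats 4000000 in
theorem interpCF {S : IHedge} {CC : ITy} (h : IProvCF S CC) :
    ∀ (Γ : ICtx) (Δ : IHedge), Δ ≠ [] → Γ.plug Δ = S →
    ∃ E : ITy, IProvCF Δ E ∧ IProvCF (Γ.plug [.leaf E]) CC ∧
      (∀ i, sigmaTy i E ≤ min (sigmaHedge i Δ) (sigmaCtx i Γ + sigmaTy i CC)) ∧
      (∀ i, tauTy i E ≤ min (tauHedge i Δ) (tauCtx i Γ + tauTy i CC)) := by
  induction h with
  | id p =>
    intro Γ Δ hΔ hEq
    rcases plug_eq_singleton hΔ hEq with ⟨rfl, rfl⟩ | ⟨j, d, rfl, ht⟩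
    · refine ⟨.prim p, .id p, by simpa [ICtx.plug] using IProvCF.id p, ?_, ?_⟩ <;>
        intro i0 <;>
        simp [sigmaTy, tauTy, sigmaCtx, tauCtx]
    · exact absurd ht (by simp)
  | ldivR Pi A B hne hp ih =>
    intro Γ Δ hΔ hEq
    subst hEq
    obtain ⟨E, hE1, hE2, hEσ, hEτ⟩ := ih (ICtx.comp (.hole [.leaf A] []) Γ) Δ hΔ
      (by simp [ICtx.plug])
    refine ⟨E, hE1, ?_, ?_, ?_⟩
    · refine IProvCF.ldivR _ A B (plug_ne_nil (by simp)) ?_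
      simpa [ICtx.plug] using hE2
    · intro i0
      have hb := hEσ i0
      have g1 := congrArg (sigmaHedge i0) (ICtx.comp_plug (.hole [.leaf A] []) Γ ([] : IHedge))
      simp [ICtx.plug, sigmaCtx, sigmaTy] at hb g1 ⊢
      omega
    · intro i0
      have hb := hEτ i0
      have g1 := congrArg (tauHedge i0) (ICtx.comp_plug (.hole [.leaf A] []) Γ ([] : IHedge))
      simp [ICtx.plug, tauCtx, tauTy] at hb g1 ⊢
      omega
  | rdivR Pi A B hne hp ih =>
    intro Γ Δ hΔ hEq
    subst hEq
    obtain ⟨E, hE1, hE2, hEσ, hEτ⟩ := ih (ICtx.comp (.hole [] [.leaf A]) Γ) Δ hΔ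
      (by simp [ICtx.plug])
    refine ⟨E, hE1, ?_, ?_, ?_⟩
    · refine IProvCF.rdivR _ A B (plug_ne_nil (by simp)) ?_
      simpa [ICtx.plug] using hE2
    · intro i0
      have hb := hEσ i0
      have g1 := congrArg (sigmaHedge i0) (ICtx.comp_plug (.hole [] [.leaf A]) Γ ([] : IHedge))
      simp [ICtx.plug, sigmaCtx, sigmaTy] at hb g1 ⊢
      omega
    · intro i0
      have hb := hEτ i0
      have g1 := congrArg (tauHedge i0) (ICtx.comp_plug (.hole [] [.leaf A]) Γ ([] : IHedge))
      simp [ICtx.plug, tauCtx, tauTy] at hb g1 ⊢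
      omega
  | mulR G₁ G₂ A B h1 h2 ih1 ih2 =>
    intro Γ Δ hΔ hEq
    rcases plug_eq_append hΔ hEq with ⟨c₁, hc, he⟩ | ⟨c₂, hc, he⟩ |
      ⟨p, q, Δ₁, Δ₂, hΔ₁, hΔ₂, rfl, rfl, rfl, rfl⟩
    · obtain ⟨E, hE1, hE2, hEσ, hEτ⟩ := ih1 c₁ Δ hΔ hc
      refine ⟨E, hE1, ?_, ?_, ?_⟩
      · rw [he [.leaf E]]
        exact IProvCF.mulR _ G₂ A B hE2 h2
      · intro i0
        have hb := hEσ i0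
        have g1 := congrArg (sigmaHedge i0) (he ([] : IHedge))
        simp [sigmaTy] at hb g1 ⊢
        omega
      · intro i0
        have hb := hEτ i0
        have g1 := congrArg (tauHedge i0) (he ([] : IHedge))
        simp [tauTy] at hb g1 ⊢
        omega
    · obtain ⟨E, hE1, hE2, hEσ, hEτ⟩ := ih2 c₂ Δ hΔ hc
      refine ⟨E, hE1, ?_, ?_, ?_⟩
      · rw [he [.leaf E]]
        exact IProvCF.mulR G₁ _ A B h1 hE2
      · intro i0
        have hb := hEσ i0
        have g1 := congrArg (sigmaHedge i0) (he ([] : IHedge))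
        simp [sigmaTy] at hb g1 ⊢
        omega
      · intro i0
        have hb := hEτ i0
        have g1 := congrArg (tauHedge i0) (he ([] : IHedge))
        simp [tauTy] at hb g1 ⊢
        omega
    · obtain ⟨E₁, f1, f2, fσ, fτ⟩ := ih1 (.hole p []) Δ₁ hΔ₁ (by simp [ICtx.plug])
      obtain ⟨E₂, g1, g2, gσ, gτ⟩ := ih2 (.hole [] q) Δ₂ hΔ₂ (by simp [ICtx.plug])
      refine ⟨.mul E₁ E₂, IProvCF.mulR Δ₁ Δ₂ E₁ E₂ f1 g1, ?_, ?_, ?_⟩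
      · have hmr := IProvCF.mulR (p ++ [.leaf E₁]) ([.leaf E₂] ++ q) A B
          (by simpa [ICtx.plug] using f2) (by simpa [ICtx.plug] using g2)
        have := IProvCF.mulL (.hole p q) E₁ E₂ (.mul A B) (by simpa [ICtx.plug] using hmr)
        simpa [ICtx.plug] using this
      · intro i0
        have hb := fσ i0; have hb2 := gσ i0
        simp [sigmaTy, sigmaCtx] at hb hb2 ⊢
        omega
      · intro i0
        have hb := fτ i0; have hb2 := gτ i0
        simp [tauTy, tauCtx] at hb hb2 ⊢
        omega
  | diaR G₁ i A hp ih =>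
    intro Γ Δ hΔ hEq
    rcases plug_eq_node hΔ hEq with ⟨rfl, rfl⟩ | ⟨d, rfl, hd⟩
    · obtain ⟨E₀, f1, f2, fσ, fτ⟩ := ih (.hole [] []) G₁ hp.ne_nil (by simp [ICtx.plug])
      refine ⟨.dia i E₀, ?_, ?_, ?_, ?_⟩
      · exact IProvCF.diaR G₁ i E₀ (by simpa [ICtx.plug] using f1)
      · have hdr := IProvCF.diaR [.leaf E₀] i A (by simpa [ICtx.plug] using f2)
        have := IProvCF.diaL (.hole [] []) i E₀ (.dia i A) (by simpa [ICtx.plug] using hdr)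
        simpa [ICtx.plug] using this
      · intro i0
        have hb := fσ i0
        simp [sigmaTy, sigmaCtx] at hb ⊢
        omega
      · intro i0
        have hb := fτ i0
        simp [tauTy, tauCtx] at hb ⊢
        omega
    · obtain ⟨E, hE1, hE2, hEσ, hEτ⟩ := ih d Δ hΔ hd
      refine ⟨E, hE1, ?_, ?_, ?_⟩
      · have := IProvCF.diaR (d.plug [.leaf E]) i A hE2
        simpa [ICtx.plug] using this
      · intro i0
        have hb := hEσ i0
        simp [sigmaTy, sigmaCtx] at hb ⊢
        omega
      · intro i0
        have hb := hEτ i0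
        simp [tauTy, tauCtx] at hb ⊢
        omega
  | boxR G₁ i A hp ih =>
    intro Γ Δ hΔ hEq
    subst hEq
    obtain ⟨E, hE1, hE2, hEσ, hEτ⟩ := ih (.brk i Γ [] []) Δ hΔ (by simp [ICtx.plug])
    refine ⟨E, hE1, ?_, ?_, ?_⟩
    · refine IProvCF.boxR _ i A ?_
      simpa [ICtx.plug] using hE2
    · intro i0
      have hb := hEσ i0
      simp [sigmaTy, sigmaCtx] at hb ⊢
      omega
    · intro i0
      have hb := hEτ i0
      simp [tauTy, tauCtx] at hb ⊢
      omega
  | mulL G₁ A B C hp ih =>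
    intro Γ Δ hΔ hEq
    rcases decomp Γ G₁ Δ [.leaf (.mul A B)] hΔ (by simp) hEq with
      ⟨K, hK, he⟩ | ⟨K, hK, he⟩ | ⟨c2, ⟨rfl, rfl⟩ | ⟨rfl, rfl⟩⟩ |
      ⟨K, X, Y, Z, hX, hY, hZ, ⟨e1, e2, e3, e4⟩ | ⟨e1, e2, e3, e4⟩⟩
    · obtain ⟨E, hE1, hE2, hEσ, hEτ⟩ := ih Γ (K.plug [.leaf A, .leaf B])
        (plug_ne_nil (by simp)) (he _).symm
      refine ⟨E, ?_, hE2, ?_, ?_⟩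
      · rw [← hK]
        exact IProvCF.mulL K A B E hE1
      · intro i0
        have hb := hEσ i0
        rw [← hK]
        simp [sigmaTy] at hb ⊢
        omega
      · intro i0
        have hb := hEτ i0
        rw [← hK]
        simp [tauTy] at hb ⊢
        omega
    · rcases plug_eq_singleton hΔ hK with ⟨rfl, rfl⟩ | ⟨j, d, rfl, ht⟩
      · obtain ⟨E, hE1, hE2, hEσ, hEτ⟩ := ih G₁ [.leaf A, .leaf B] (by simp) rfl
        refine ⟨E, ?_, ?_, ?_, ?_⟩
        · have := IProvCF.mulL (.hole [] []) A B E (by simpa [ICtx.plug] using hE1)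
          simpa [ICtx.plug] using this
        · rw [he [.leaf E]]
          simpa [ICtx.plug] using hE2
        · intro i0
          have hb := hEσ i0
          have g1 := congrArg (sigmaHedge i0) (he ([] : IHedge))
          simp [sigmaTy, ICtx.plug] at hb g1 ⊢
          omega
        · intro i0
          have hb := hEτ i0
          have g1 := congrArg (tauHedge i0) (he ([] : IHedge))
          simp [tauTy, ICtx.plug] at hb g1 ⊢
          omega
      · exact absurd ht (by simp)
    · -- disjoint, orientation 1 : Γ = fill2 c2 zone, G₁ = fill1 c2 Δ
      obtain ⟨E, hE1, hE2, hEσ, hEτ⟩ := ih (c2.fill2 [.leaf A, .leaf B]) Δ hΔ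
        (by rw [← ICtx2.swap])
      refine ⟨E, hE1, ?_, ?_, ?_⟩
      · have hE2' : IProvCF ((c2.fill1 [.leaf E]).plug [.leaf A, .leaf B]) C := by
          rw [ICtx2.swap]; exact hE2
        have := IProvCF.mulL (c2.fill1 [.leaf E]) A B C hE2'
        rw [ICtx2.swap] at this
        exact this
      · intro i0
        have hb := hEσ i0
        have g1 := congrArg (sigmaHedge i0) (ICtx2.swap c2 [] [.leaf A, .leaf B])
        have g2 := congrArg (sigmaHedge i0) (ICtx2.swap c2 [] [.leaf (.mul A B)])
        simp [-ICtx2.swap, sigmaTy] at hb g1 g2 ⊢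
        omega
      · intro i0
        have hb := hEτ i0
        have g1 := congrArg (tauHedge i0) (ICtx2.swap c2 [] [.leaf A, .leaf B])
        have g2 := congrArg (tauHedge i0) (ICtx2.swap c2 [] [.leaf (.mul A B)])
        simp [-ICtx2.swap, tauTy] at hb g1 g2 ⊢
        omega
    · -- disjoint, orientation 2 : Γ = fill1 c2 zone, G₁ = fill2 c2 Δ
      obtain ⟨E, hE1, hE2, hEσ, hEτ⟩ := ih (c2.fill1 [.leaf A, .leaf B]) Δ hΔ
        (by rw [ICtx2.swap])
      refine ⟨E, hE1, ?_, ?_, ?_⟩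
      · have hE2' : IProvCF ((c2.fill2 [.leaf E]).plug [.leaf A, .leaf B]) C := by
          rw [← ICtx2.swap]; exact hE2
        have := IProvCF.mulL (c2.fill2 [.leaf E]) A B C hE2'
        rw [← ICtx2.swap] at this
        exact this
      · intro i0
        have hb := hEσ i0
        have g1 := congrArg (sigmaHedge i0) (ICtx2.swap c2 [.leaf A, .leaf B] [])
        have g2 := congrArg (sigmaHedge i0) (ICtx2.swap c2 [.leaf (.mul A B)] [])
        simp [-ICtx2.swap, sigmaTy] at hb g1 g2 ⊢
        omega
      · intro i0
        have hb := hEτ i0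
        have g1 := congrArg (tauHedge i0) (ICtx2.swap c2 [.leaf A, .leaf B] [])
        have g2 := congrArg (tauHedge i0) (ICtx2.swap c2 [.leaf (.mul A B)] [])
        simp [-ICtx2.swap, tauTy] at hb g1 g2 ⊢
        omega
    · exact absurd e2 (by intro e; exact singleton_split hY hZ e.symm)
    · exact absurd e1 (by intro e; exact singleton_split hX hY e.symm)
  | diaL G₁ i A B hp ih =>
    intro Γ Δ hΔ hEq
    rcases decomp Γ G₁ Δ [.leaf (.dia i A)] hΔ (by simp) hEq with
      ⟨K, hK, he⟩ | ⟨K, hK, he⟩ | ⟨c2, ⟨rfl, rfl⟩ | ⟨rfl, rfl⟩⟩ |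
      ⟨K, X, Y, Z, hX, hY, hZ, ⟨e1, e2, e3, e4⟩ | ⟨e1, e2, e3, e4⟩⟩
    · obtain ⟨E, hE1, hE2, hEσ, hEτ⟩ := ih Γ (K.plug [.node i [.leaf A]])
        (plug_ne_nil (by simp)) (he _).symm
      refine ⟨E, ?_, hE2, ?_, ?_⟩
      · rw [← hK]
        exact IProvCF.diaL K i A E hE1
      · intro i0
        have hb := hEσ i0
        rw [← hK]
        simp [sigmaTy] at hb ⊢
        omega
      · intro i0
        have hb := hEτ i0
        rw [← hK]
        simp [tauTy] at hb ⊢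
        omega
    · rcases plug_eq_singleton hΔ hK with ⟨rfl, rfl⟩ | ⟨j, d, rfl, ht⟩
      · obtain ⟨E, hE1, hE2, hEσ, hEτ⟩ := ih G₁ [.node i [.leaf A]] (by simp) rfl
        refine ⟨E, ?_, ?_, ?_, ?_⟩
        · have := IProvCF.diaL (.hole [] []) i A E (by simpa [ICtx.plug] using hE1)
          simpa [ICtx.plug] using this
        · rw [he [.leaf E]]
          simpa [ICtx.plug] using hE2
        · intro i0
          have hb := hEσ i0
          have g1 := congrArg (sigmaHedge i0) (he ([] : IHedge))
          simp [sigmaTy, ICtx.plug] at hb g1 ⊢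
          omega
        · intro i0
          have hb := hEτ i0
          have g1 := congrArg (tauHedge i0) (he ([] : IHedge))
          simp [tauTy, ICtx.plug] at hb g1 ⊢
          omega
      · exact absurd ht (by simp)
    · obtain ⟨E, hE1, hE2, hEσ, hEτ⟩ := ih (c2.fill2 [.node i [.leaf A]]) Δ hΔ
        (by rw [← ICtx2.swap])
      refine ⟨E, hE1, ?_, ?_, ?_⟩
      · have hE2' : IProvCF ((c2.fill1 [.leaf E]).plug [.node i [.leaf A]]) B := by
          rw [ICtx2.swap]; exact hE2
        have := IProvCF.diaL (c2.fill1 [.leaf E]) i A B hE2'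
        rw [ICtx2.swap] at this
        exact this
      · intro i0
        have hb := hEσ i0
        have g1 := congrArg (sigmaHedge i0) (ICtx2.swap c2 [] [.node i [.leaf A]])
        have g2 := congrArg (sigmaHedge i0) (ICtx2.swap c2 [] [.leaf (.dia i A)])
        simp [-ICtx2.swap, sigmaTy] at hb g1 g2 ⊢
        omega
      · intro i0
        have hb := hEτ i0
        have g1 := congrArg (tauHedge i0) (ICtx2.swap c2 [] [.node i [.leaf A]])
        have g2 := congrArg (tauHedge i0) (ICtx2.swap c2 [] [.leaf (.dia i A)])
        simp [-ICtx2.swap, tauTy] at hb g1 g2 ⊢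
        omega
    · obtain ⟨E, hE1, hE2, hEσ, hEτ⟩ := ih (c2.fill1 [.node i [.leaf A]]) Δ hΔ
        (by rw [ICtx2.swap])
      refine ⟨E, hE1, ?_, ?_, ?_⟩
      · have hE2' : IProvCF ((c2.fill2 [.leaf E]).plug [.node i [.leaf A]]) B := by
          rw [← ICtx2.swap]; exact hE2
        have := IProvCF.diaL (c2.fill2 [.leaf E]) i A B hE2'
        rw [← ICtx2.swap] at this
        exact this
      · intro i0
        have hb := hEσ i0
        have g1 := congrArg (sigmaHedge i0) (ICtx2.swap c2 [.node i [.leaf A]] [])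
        have g2 := congrArg (sigmaHedge i0) (ICtx2.swap c2 [.leaf (.dia i A)] [])
        simp [-ICtx2.swap, sigmaTy] at hb g1 g2 ⊢
        omega
      · intro i0
        have hb := hEτ i0
        have g1 := congrArg (tauHedge i0) (ICtx2.swap c2 [.node i [.leaf A]] [])
        have g2 := congrArg (tauHedge i0) (ICtx2.swap c2 [.leaf (.dia i A)] [])
        simp [-ICtx2.swap, tauTy] at hb g1 g2 ⊢
        omega
    · exact absurd e2 (by intro e; exact singleton_split hY hZ e.symm)
    · exact absurd e1 (by intro e; exact singleton_split hX hY e.symm)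
  | boxL G₁ i A B hp ih =>
    intro Γ Δ hΔ hEq
    rcases decomp Γ G₁ Δ [.node i [.leaf (.box i A)]] hΔ (by simp) hEq with
      ⟨K, hK, he⟩ | ⟨K, hK, he⟩ | ⟨c2, ⟨rfl, rfl⟩ | ⟨rfl, rfl⟩⟩ |
      ⟨K, X, Y, Z, hX, hY, hZ, ⟨e1, e2, e3, e4⟩ | ⟨e1, e2, e3, e4⟩⟩
    · obtain ⟨E, hE1, hE2, hEσ, hEτ⟩ := ih Γ (K.plug [.leaf A])
        (plug_ne_nil (by simp)) (he _).symm
      refine ⟨E, ?_, hE2, ?_, ?_⟩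
      · rw [← hK]
        exact IProvCF.boxL K i A E hE1
      · intro i0
        have hb := hEσ i0
        rw [← hK]
        simp [sigmaTy] at hb ⊢
        omega
      · intro i0
        have hb := hEτ i0
        rw [← hK]
        simp [tauTy] at hb ⊢
        omega
    · rcases plug_eq_node hΔ hK with ⟨rfl, rfl⟩ | ⟨d, rfl, hd⟩
      · -- Δ = [node i [leaf (box i A)]]
        obtain ⟨E, hE1, hE2, hEσ, hEτ⟩ := ih G₁ [.leaf A] (by simp) rfl
        refine ⟨E, ?_, ?_, ?_, ?_⟩
        · have := IProvCF.boxL (.hole [] []) i A E (by simpa [ICtx.plug] using hE1)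
          simpa [ICtx.plug] using this
        · rw [he [.leaf E]]
          simpa [ICtx.plug] using hE2
        · intro i0
          have hb := hEσ i0
          have g1 := congrArg (sigmaHedge i0) (he ([] : IHedge))
          simp [sigmaTy, ICtx.plug] at hb g1 ⊢
          omega
        · intro i0
          have hb := hEτ i0
          have g1 := congrArg (tauHedge i0) (he ([] : IHedge))
          simp [tauTy, ICtx.plug] at hb g1 ⊢
          omega
      · rcases plug_eq_singleton hΔ hd with ⟨rfl, rfl⟩ | ⟨j, d', rfl, ht⟩
        · -- Δ = [leaf (box i A)]
          obtain ⟨E₀, f1, f2, fσ, fτ⟩ := ih G₁ [.leaf A] (by simp) rfl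
          refine ⟨.box i E₀, ?_, ?_, ?_, ?_⟩
          · refine IProvCF.boxR _ i E₀ ?_
            have := IProvCF.boxL (.hole [] []) i A E₀ (by simpa [ICtx.plug] using f1)
            simpa [ICtx.plug] using this
          · have := IProvCF.boxL G₁ i E₀ B f2
            rw [he [.leaf (.box i E₀)]]
            simpa [ICtx.plug] using this
          · intro i0
            have hb := fσ i0
            have g1 := congrArg (sigmaHedge i0) (he ([] : IHedge))
            simp [sigmaTy, ICtx.plug] at hb g1 ⊢
            omega
          · intro i0
            have hb := fτ i0
            have g1 := congrArg (tauHedge i0) (he ([] : IHedge))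
            simp [tauTy, ICtx.plug] at hb g1 ⊢
            omega
        · exact absurd ht (by simp)
    · obtain ⟨E, hE1, hE2, hEσ, hEτ⟩ := ih (c2.fill2 [.leaf A]) Δ hΔ
        (by rw [← ICtx2.swap])
      refine ⟨E, hE1, ?_, ?_, ?_⟩
      · have hE2' : IProvCF ((c2.fill1 [.leaf E]).plug [.leaf A]) B := by
          rw [ICtx2.swap]; exact hE2
        have := IProvCF.boxL (c2.fill1 [.leaf E]) i A B hE2'
        rw [ICtx2.swap] at this
        exact this
      · intro i0
        have hb := hEσ i0
        have g1 := congrArg (sigmaHedge i0) (ICtx2.swap c2 [] [.leaf A])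
        have g2 := congrArg (sigmaHedge i0) (ICtx2.swap c2 [] [.node i [.leaf (.box i A)]])
        simp [-ICtx2.swap, sigmaTy] at hb g1 g2 ⊢
        omega
      · intro i0
        have hb := hEτ i0
        have g1 := congrArg (tauHedge i0) (ICtx2.swap c2 [] [.leaf A])
        have g2 := congrArg (tauHedge i0) (ICtx2.swap c2 [] [.node i [.leaf (.box i A)]])
        simp [-ICtx2.swap, tauTy] at hb g1 g2 ⊢
        omega
    · obtain ⟨E, hE1, hE2, hEσ, hEτ⟩ := ih (c2.fill1 [.leaf A]) Δ hΔ
        (by rw [ICtx2.swap])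
      refine ⟨E, hE1, ?_, ?_, ?_⟩
      · have hE2' : IProvCF ((c2.fill2 [.leaf E]).plug [.leaf A]) B := by
          rw [← ICtx2.swap]; exact hE2
        have := IProvCF.boxL (c2.fill2 [.leaf E]) i A B hE2'
        rw [← ICtx2.swap] at this
        exact this
      · intro i0
        have hb := hEσ i0
        have g1 := congrArg (sigmaHedge i0) (ICtx2.swap c2 [.leaf A] [])
        have g2 := congrArg (sigmaHedge i0) (ICtx2.swap c2 [.node i [.leaf (.box i A)]] [])
        simp [-ICtx2.swap, sigmaTy] at hb g1 g2 ⊢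
        omega
      · intro i0
        have hb := hEτ i0
        have g1 := congrArg (tauHedge i0) (ICtx2.swap c2 [.leaf A] [])
        have g2 := congrArg (tauHedge i0) (ICtx2.swap c2 [.node i [.leaf (.box i A)]] [])
        simp [-ICtx2.swap, tauTy] at hb g1 g2 ⊢
        omega
    · exact absurd e2 (by intro e; exact singleton_split hY hZ e.symm)
    · exact absurd e1 (by intro e; exact singleton_split hX hY e.symm)
  | ldivL G₀ D₀ A B C h1 h2 ih1 ih2 =>
    intro Γ Δ hΔ hEq
    rcases decomp Γ D₀ Δ (G₀ ++ [.leaf (.ldiv A B)]) hΔ (by simp) hEq with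
      ⟨K, hK, he⟩ | ⟨K, hK, he⟩ | ⟨c2, ⟨rfl, rfl⟩ | ⟨rfl, rfl⟩⟩ |
      ⟨K, X, Y, Z, hX, hY, hZ, ⟨e1, e2, e3, e4⟩ | ⟨e1, e2, e3, e4⟩⟩
    · -- zone inside Δ
      obtain ⟨E, hE1, hE2, hEσ, hEτ⟩ := ih2 Γ (K.plug [.leaf B])
        (plug_ne_nil (by simp)) (he _).symm
      refine ⟨E, ?_, hE2, ?_, ?_⟩
      · rw [← hK]
        exact IProvCF.ldivL G₀ K A B E h1 hE1
      · intro i0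
        have hb := hEσ i0
        rw [← hK]
        simp [sigmaTy] at hb ⊢
        omega
      · intro i0
        have hb := hEτ i0
        rw [← hK]
        simp [tauTy] at hb ⊢
        omega
    · -- Δ inside zone
      rcases plug_eq_append hΔ hK with ⟨c₁, hc, he2⟩ | ⟨c₂, hc, he2⟩ |
        ⟨p, q, Δ₁, Δ₂, hΔ₁, hΔ₂, rfl, rfl, rfl, hq⟩
      · -- Δ inside G₀
        obtain ⟨E, hE1, hE2, hEσ, hEτ⟩ := ih1 c₁ Δ hΔ hc
        refine ⟨E, hE1, ?_, ?_, ?_⟩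
        · have out := IProvCF.ldivL (c₁.plug [.leaf E]) D₀ A B C hE2 h2
          rw [he [.leaf E], he2 [.leaf E]]
          exact out
        · intro i0
          have hb := hEσ i0
          have g1 := congrArg (sigmaHedge i0) (he ([] : IHedge))
          have g2 := congrArg (sigmaHedge i0) (he2 ([] : IHedge))
          simp [sigmaTy] at hb g1 g2 ⊢
          omega
        · intro i0
          have hb := hEτ i0
          have g1 := congrArg (tauHedge i0) (he ([] : IHedge))
          have g2 := congrArg (tauHedge i0) (he2 ([] : IHedge))
          simp [tauTy] at hb g1 g2 ⊢
          omega
      · -- Δ is the division leaf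
        rcases plug_eq_singleton hΔ hc with ⟨rfl, rfl⟩ | ⟨j, d, rfl, ht⟩
        · obtain ⟨E₁, f1, f2, fσ, fτ⟩ := ih1 (.hole [] []) G₀ h1.ne_nil (by simp [ICtx.plug])
          obtain ⟨E₀, g1p, g2p, gσ, gτ⟩ := ih2 D₀ [.leaf B] (by simp) rfl
          refine ⟨.ldiv E₁ E₀, ?_, ?_, ?_, ?_⟩
          · refine IProvCF.ldivR _ E₁ E₀ (by simp) ?_
            have hstep := IProvCF.ldivL [.leaf E₁] (.hole [] []) A B E₀
              (by simpa [ICtx.plug] using f2) (by simpa [ICtx.plug] using g1p)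
            simpa [ICtx.plug] using hstep
          · have out := IProvCF.ldivL G₀ D₀ E₁ E₀ C f1 g2p
            rw [he [.leaf (.ldiv E₁ E₀)], he2 [.leaf (.ldiv E₁ E₀)]]
            simpa [ICtx.plug] using out
          · intro i0
            have hb := fσ i0; have hb2 := gσ i0
            have g1 := congrArg (sigmaHedge i0) (he ([] : IHedge))
            have g2 := congrArg (sigmaHedge i0) (he2 ([] : IHedge))
            simp [sigmaTy, sigmaCtx, ICtx.plug] at hb hb2 g1 g2 ⊢
            omega
          · intro i0
            have hb := fτ i0; have hb2 := gτ i0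
            have g1 := congrArg (tauHedge i0) (he ([] : IHedge))
            have g2 := congrArg (tauHedge i0) (he2 ([] : IHedge))
            simp [tauTy, tauCtx, ICtx.plug] at hb hb2 g1 g2 ⊢
            omega
        · exact absurd ht (by simp)
      · -- Δ straddles : Δ = Δ₁ ++ Δ₂ with Δ₂ ++ q = [leaf ldiv]
        obtain ⟨rfl, rfl⟩ : Δ₂ = [ITree.leaf (ITy.ldiv A B)] ∧ q = [] := by
          have := singleton_seg hΔ₂ (show ([] : IHedge) ++ Δ₂ ++ q
            = [.leaf (.ldiv A B)] by simpa using hq.symm)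
          exact ⟨this.2.1, this.2.2⟩
        by_cases hp0 : p = []
        · subst hp0
          obtain ⟨E₀, g1p, g2p, gσ, gτ⟩ := ih2 D₀ [.leaf B] (by simp) rfl
          refine ⟨E₀, ?_, ?_, ?_, ?_⟩
          · have out := IProvCF.ldivL ([] ++ Δ₁) (.hole [] []) A B E₀ h1
              (by simpa [ICtx.plug] using g1p)
            simpa [ICtx.plug] using out
          · rw [he [.leaf E₀]]
            simpa [ICtx.plug] using g2p
          · intro i0
            have hb := gσ i0
            have g1 := congrArg (sigmaHedge i0) (he ([] : IHedge))
            simp [sigmaTy, ICtx.plug] at hb g1 ⊢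
            omega
          · intro i0
            have hb := gτ i0
            have g1 := congrArg (tauHedge i0) (he ([] : IHedge))
            simp [tauTy, ICtx.plug] at hb g1 ⊢
            omega
        · obtain ⟨E₁, f1, f2, fσ, fτ⟩ := ih1 (.hole [] Δ₁) p hp0 (by simp [ICtx.plug])
          obtain ⟨E₀, g1p, g2p, gσ, gτ⟩ := ih2 D₀ [.leaf B] (by simp) rfl
          refine ⟨.ldiv E₁ E₀, ?_, ?_, ?_, ?_⟩
          · refine IProvCF.ldivR _ E₁ E₀ (by simp) ?_
            have out := IProvCF.ldivL (.leaf E₁ :: Δ₁) (.hole [] []) A B E₀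
              (by simpa [ICtx.plug] using f2) (by simpa [ICtx.plug] using g1p)
            simpa [ICtx.plug] using out
          · have out := IProvCF.ldivL p D₀ E₁ E₀ C f1 g2p
            rw [he [.leaf (.ldiv E₁ E₀)]]
            simpa [ICtx.plug] using out
          · intro i0
            have hb := fσ i0; have hb2 := gσ i0
            have g1 := congrArg (sigmaHedge i0) (he ([] : IHedge))
            simp [sigmaTy, sigmaCtx, ICtx.plug] at hb hb2 g1 ⊢
            omega
          · intro i0
            have hb := fτ i0; have hb2 := gτ i0
            have g1 := congrArg (tauHedge i0) (he ([] : IHedge))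
            simp [tauTy, tauCtx, ICtx.plug] at hb hb2 g1 ⊢
            omega
    · -- disjoint, orientation 1
      obtain ⟨E, hE1, hE2, hEσ, hEτ⟩ := ih2 (c2.fill2 [.leaf B]) Δ hΔ (by rw [← ICtx2.swap])
      refine ⟨E, hE1, ?_, ?_, ?_⟩
      · have hE2' : IProvCF ((c2.fill1 [.leaf E]).plug [.leaf B]) C := by
          rw [ICtx2.swap]; exact hE2
        have out := IProvCF.ldivL G₀ (c2.fill1 [.leaf E]) A B C h1 hE2'
        rw [ICtx2.swap] at out
        exact out
      · intro i0
        have hb := hEσ i0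
        have g1 := congrArg (sigmaHedge i0) (ICtx2.swap c2 [] [.leaf B])
        have g2 := congrArg (sigmaHedge i0)
          (ICtx2.swap c2 [] (G₀ ++ [.leaf (.ldiv A B)]))
        simp [-ICtx2.swap, sigmaTy] at hb g1 g2 ⊢
        omega
      · intro i0
        have hb := hEτ i0
        have g1 := congrArg (tauHedge i0) (ICtx2.swap c2 [] [.leaf B])
        have g2 := congrArg (tauHedge i0)
          (ICtx2.swap c2 [] (G₀ ++ [.leaf (.ldiv A B)]))
        simp [-ICtx2.swap, tauTy] at hb g1 g2 ⊢
        omega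
    · -- disjoint, orientation 2
      obtain ⟨E, hE1, hE2, hEσ, hEτ⟩ := ih2 (c2.fill1 [.leaf B]) Δ hΔ (by rw [ICtx2.swap])
      refine ⟨E, hE1, ?_, ?_, ?_⟩
      · have hE2' : IProvCF ((c2.fill2 [.leaf E]).plug [.leaf B]) C := by
          rw [← ICtx2.swap]; exact hE2
        have out := IProvCF.ldivL G₀ (c2.fill2 [.leaf E]) A B C h1 hE2'
        rw [← ICtx2.swap] at out
        exact out
      · intro i0
        have hb := hEσ i0
        have g1 := congrArg (sigmaHedge i0) (ICtx2.swap c2 [.leaf B] [])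
        have g2 := congrArg (sigmaHedge i0)
          (ICtx2.swap c2 (G₀ ++ [.leaf (.ldiv A B)]) [])
        simp [-ICtx2.swap, sigmaTy] at hb g1 g2 ⊢
        omega
      · intro i0
        have hb := hEτ i0
        have g1 := congrArg (tauHedge i0) (ICtx2.swap c2 [.leaf B] [])
        have g2 := congrArg (tauHedge i0)
          (ICtx2.swap c2 (G₀ ++ [.leaf (.ldiv A B)]) [])
        simp [-ICtx2.swap, tauTy] at hb g1 g2 ⊢
        omega
    · -- overlap : Δ = X ++ Y, zone = Y ++ Z
      obtain ⟨W₁, rfl, rfl⟩ : ∃ W₁, G₀ = Y ++ W₁ ∧ Z = W₁ ++ [.leaf (.ldiv A B)] := by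
        rcases List.append_eq_append_iff.1 e2 with ⟨a, ha1, ha2⟩ | ⟨c', hc1, hc2⟩
        · cases a with
          | nil => exact ⟨[], by simpa using ha1.symm, by simpa using ha2.symm⟩
          | cons t ts =>
            exfalso
            have hl := congrArg List.length ha2
            have hz : 1 ≤ Z.length := List.length_pos_iff.mpr hZ
            simp only [List.length_cons, List.length_append, List.length_nil] at hl
            omega
        · exact ⟨c', hc1, hc2⟩
      obtain ⟨E₁, f1, f2, fσ, fτ⟩ := ih1 (.hole [] W₁) Y hY (by simp [ICtx.plug])
      obtain ⟨E₂, g1p, g2p, gσ, gτ⟩ := ih2 (K.comp (.hole [] [.leaf B])) X hX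
        (by rw [e4]; simp [ICtx.plug])
      refine ⟨.mul E₂ E₁, ?_, ?_, ?_, ?_⟩
      · rw [e1]
        exact IProvCF.mulR X Y E₂ E₁ g1p f1
      · have s1 := IProvCF.ldivL (.leaf E₁ :: W₁) (K.comp (.hole [.leaf E₂] [])) A B C
          (by simpa [ICtx.plug] using f2) (by simpa [ICtx.plug] using g2p)
        have s2 := IProvCF.mulL (K.comp (.hole [] (W₁ ++ [.leaf (.ldiv A B)]))) E₂ E₁ C
          (by simpa [ICtx.plug] using s1)
        rw [e3 [.leaf (.mul E₂ E₁)]]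
        simpa [ICtx.plug] using s2
      · intro i0
        have hb := fσ i0; have hb2 := gσ i0
        have g3 := congrArg (sigmaHedge i0) (e3 ([] : IHedge))
        rw [e1]
        simp [sigmaTy, sigmaCtx, ICtx.plug] at hb hb2 g3 ⊢
        omega
      · intro i0
        have hb := fτ i0; have hb2 := gτ i0
        have g3 := congrArg (tauHedge i0) (e3 ([] : IHedge))
        rw [e1]
        simp [tauTy, tauCtx, ICtx.plug] at hb hb2 g3 ⊢
        omega
    · -- overlap : zone = X ++ Y, Δ = Y ++ Z
      obtain ⟨Y₁, rfl, rfl⟩ : ∃ Y₁, G₀ = X ++ Y₁ ∧ Y = Y₁ ++ [.leaf (.ldiv A B)] := by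
        rcases List.append_eq_append_iff.1 e1 with ⟨a, ha1, ha2⟩ | ⟨c', hc1, hc2⟩
        · cases a with
          | nil => exact ⟨[], by simpa using ha1.symm, by simpa using ha2.symm⟩
          | cons t ts =>
            exfalso
            have hl := congrArg List.length ha2
            have hy : 1 ≤ Y.length := List.length_pos_iff.mpr hY
            simp only [List.length_cons, List.length_append, List.length_nil] at hl
            omega
        · exact ⟨c', hc1, hc2⟩
      obtain ⟨E₁, f1, f2, fσ, fτ⟩ := ih1 (.hole [] Y₁) X hX (by simp [ICtx.plug])
      obtain ⟨E₂, g1p, g2p, gσ, gτ⟩ := ih2 K ([.leaf B] ++ Z) (by simp) (e4 [.leaf B]).symm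
      refine ⟨.ldiv E₁ E₂, ?_, ?_, ?_, ?_⟩
      · refine IProvCF.ldivR _ E₁ E₂ hΔ ?_
        have s1 := IProvCF.ldivL (.leaf E₁ :: Y₁) (.hole [] Z) A B E₂
          (by simpa [ICtx.plug] using f2) (by simpa [ICtx.plug] using g1p)
        rw [e2]
        simpa [ICtx.plug] using s1
      · have out := IProvCF.ldivL X K E₁ E₂ C f1 g2p
        rw [e3 [.leaf (.ldiv E₁ E₂)]]
        exact out
      · intro i0
        have hb := fσ i0; have hb2 := gσ i0
        have g3 := congrArg (sigmaHedge i0) (e3 ([] : IHedge))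
        rw [e2]
        simp [sigmaTy, sigmaCtx, ICtx.plug] at hb hb2 g3 ⊢
        omega
      · intro i0
        have hb := fτ i0; have hb2 := gτ i0
        have g3 := congrArg (tauHedge i0) (e3 ([] : IHedge))
        rw [e2]
        simp [tauTy, tauCtx, ICtx.plug] at hb hb2 g3 ⊢
        omega
  | rdivL G₀ D₀ A B C h1 h2 ih1 ih2 =>
    intro Γ Δ hΔ hEq
    have hEq' : Γ.plug Δ = D₀.plug ([.leaf (.rdiv B A)] ++ G₀) := by simpa using hEq
    rcases decomp Γ D₀ Δ ([.leaf (.rdiv B A)] ++ G₀) hΔ (by simp) hEq' with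
      ⟨K, hK, he⟩ | ⟨K, hK, he⟩ | ⟨c2, ⟨rfl, rfl⟩ | ⟨rfl, rfl⟩⟩ |
      ⟨K, X, Y, Z, hX, hY, hZ, ⟨e1, e2, e3, e4⟩ | ⟨e1, e2, e3, e4⟩⟩
    · -- zone inside Δ
      obtain ⟨E, hE1, hE2, hEσ, hEτ⟩ := ih2 Γ (K.plug [.leaf B])
        (plug_ne_nil (by simp)) (he _).symm
      refine ⟨E, ?_, hE2, ?_, ?_⟩
      · rw [← hK]
        have out := IProvCF.rdivL G₀ K A B E h1 hE1
        simpa using out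
      · intro i0
        have hb := hEσ i0
        rw [← hK]
        simp [sigmaTy] at hb ⊢
        omega
      · intro i0
        have hb := hEτ i0
        rw [← hK]
        simp [tauTy] at hb ⊢
        omega
    · -- Δ inside zone
      rcases plug_eq_append hΔ hK with ⟨c₁, hc, he2⟩ | ⟨c₂, hc, he2⟩ |
        ⟨p, q, Δ₁, Δ₂, hΔ₁, hΔ₂, rfl, rfl, hp, rfl⟩
      · -- Δ is the division leaf
        rcases plug_eq_singleton hΔ hc with ⟨rfl, rfl⟩ | ⟨j, d, rfl, ht⟩
        · obtain ⟨E₁, f1, f2, fσ, fτ⟩ := ih1 (.hole [] []) G₀ h1.ne_nil (by simp [ICtx.plug])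
          obtain ⟨E₀, g1p, g2p, gσ, gτ⟩ := ih2 D₀ [.leaf B] (by simp) rfl
          refine ⟨.rdiv E₀ E₁, ?_, ?_, ?_, ?_⟩
          · refine IProvCF.rdivR _ E₁ E₀ (by simp) ?_
            have hstep := IProvCF.rdivL [.leaf E₁] (.hole [] []) A B E₀
              (by simpa [ICtx.plug] using f2) (by simpa [ICtx.plug] using g1p)
            simpa [ICtx.plug] using hstep
          · have out := IProvCF.rdivL G₀ D₀ E₁ E₀ C f1 g2p
            rw [he [.leaf (.rdiv E₀ E₁)], he2 [.leaf (.rdiv E₀ E₁)]]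
            simpa [ICtx.plug] using out
          · intro i0
            have hb := fσ i0; have hb2 := gσ i0
            have g1 := congrArg (sigmaHedge i0) (he ([] : IHedge))
            have g2 := congrArg (sigmaHedge i0) (he2 ([] : IHedge))
            simp [sigmaTy, sigmaCtx, ICtx.plug] at hb hb2 g1 g2 ⊢
            omega
          · intro i0
            have hb := fτ i0; have hb2 := gτ i0
            have g1 := congrArg (tauHedge i0) (he ([] : IHedge))
            have g2 := congrArg (tauHedge i0) (he2 ([] : IHedge))
            simp [tauTy, tauCtx, ICtx.plug] at hb hb2 g1 g2 ⊢
            omega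
        · exact absurd ht (by simp)
      · -- Δ inside G₀
        obtain ⟨E, hE1, hE2, hEσ, hEτ⟩ := ih1 c₂ Δ hΔ hc
        refine ⟨E, hE1, ?_, ?_, ?_⟩
        · have out := IProvCF.rdivL (c₂.plug [.leaf E]) D₀ A B C hE2 h2
          rw [he [.leaf E], he2 [.leaf E]]
          simpa using out
        · intro i0
          have hb := hEσ i0
          have g1 := congrArg (sigmaHedge i0) (he ([] : IHedge))
          have g2 := congrArg (sigmaHedge i0) (he2 ([] : IHedge))
          simp [sigmaTy] at hb g1 g2 ⊢
          omega
        · intro i0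
          have hb := hEτ i0
          have g1 := congrArg (tauHedge i0) (he ([] : IHedge))
          have g2 := congrArg (tauHedge i0) (he2 ([] : IHedge))
          simp [tauTy] at hb g1 g2 ⊢
          omega
      · -- Δ straddles : p ++ Δ₁ = [leaf rdiv]
        obtain ⟨rfl, rfl, -⟩ := singleton_seg hΔ₁ (show p ++ Δ₁ ++ ([] : IHedge)
          = [.leaf (.rdiv B A)] by simpa using hp.symm)
        by_cases hq0 : q = []
        · subst hq0
          obtain ⟨E₀, g1p, g2p, gσ, gτ⟩ := ih2 D₀ [.leaf B] (by simp) rfl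
          refine ⟨E₀, ?_, ?_, ?_, ?_⟩
          · have out := IProvCF.rdivL (Δ₂ ++ []) (.hole [] []) A B E₀ h1
              (by simpa [ICtx.plug] using g1p)
            simpa [ICtx.plug] using out
          · rw [he [.leaf E₀]]
            simpa [ICtx.plug] using g2p
          · intro i0
            have hb := gσ i0
            have g1 := congrArg (sigmaHedge i0) (he ([] : IHedge))
            simp [sigmaTy, ICtx.plug] at hb g1 ⊢
            omega
          · intro i0
            have hb := gτ i0
            have g1 := congrArg (tauHedge i0) (he ([] : IHedge))
            simp [tauTy, ICtx.plug] at hb g1 ⊢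
            omega
        · obtain ⟨E₁, f1, f2, fσ, fτ⟩ := ih1 (.hole Δ₂ []) q hq0 (by simp [ICtx.plug])
          obtain ⟨E₀, g1p, g2p, gσ, gτ⟩ := ih2 D₀ [.leaf B] (by simp) rfl
          refine ⟨.rdiv E₀ E₁, ?_, ?_, ?_, ?_⟩
          · refine IProvCF.rdivR _ E₁ E₀ (by simp) ?_
            have out := IProvCF.rdivL (Δ₂ ++ [.leaf E₁]) (.hole [] []) A B E₀
              (by simpa [ICtx.plug] using f2) (by simpa [ICtx.plug] using g1p)
            simpa [ICtx.plug] using out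
          · have out := IProvCF.rdivL q D₀ E₁ E₀ C f1 g2p
            rw [he [.leaf (.rdiv E₀ E₁)]]
            simpa [ICtx.plug] using out
          · intro i0
            have hb := fσ i0; have hb2 := gσ i0
            have g1 := congrArg (sigmaHedge i0) (he ([] : IHedge))
            simp [sigmaTy, sigmaCtx, ICtx.plug] at hb hb2 g1 ⊢
            omega
          · intro i0
            have hb := fτ i0; have hb2 := gτ i0
            have g1 := congrArg (tauHedge i0) (he ([] : IHedge))
            simp [tauTy, tauCtx, ICtx.plug] at hb hb2 g1 ⊢
            omega
    · -- disjoint, orientation 1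
      obtain ⟨E, hE1, hE2, hEσ, hEτ⟩ := ih2 (c2.fill2 [.leaf B]) Δ hΔ (by rw [← ICtx2.swap])
      refine ⟨E, hE1, ?_, ?_, ?_⟩
      · have hE2' : IProvCF ((c2.fill1 [.leaf E]).plug [.leaf B]) C := by
          rw [ICtx2.swap]; exact hE2
        have out := IProvCF.rdivL G₀ (c2.fill1 [.leaf E]) A B C h1 hE2'
        have out' : IProvCF ((c2.fill1 [.leaf E]).plug ([.leaf (.rdiv B A)] ++ G₀)) C := by
          simpa using out
        rw [ICtx2.swap] at out'
        exact out'
      · intro i0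
        have hb := hEσ i0
        have g1 := congrArg (sigmaHedge i0) (ICtx2.swap c2 [] [.leaf B])
        have g2 := congrArg (sigmaHedge i0)
          (ICtx2.swap c2 [] ([.leaf (.rdiv B A)] ++ G₀))
        simp [-ICtx2.swap, sigmaTy] at hb g1 g2 ⊢
        omega
      · intro i0
        have hb := hEτ i0
        have g1 := congrArg (tauHedge i0) (ICtx2.swap c2 [] [.leaf B])
        have g2 := congrArg (tauHedge i0)
          (ICtx2.swap c2 [] ([.leaf (.rdiv B A)] ++ G₀))
        simp [-ICtx2.swap, tauTy] at hb g1 g2 ⊢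
        omega
    · -- disjoint, orientation 2
      obtain ⟨E, hE1, hE2, hEσ, hEτ⟩ := ih2 (c2.fill1 [.leaf B]) Δ hΔ (by rw [ICtx2.swap])
      refine ⟨E, hE1, ?_, ?_, ?_⟩
      · have hE2' : IProvCF ((c2.fill2 [.leaf E]).plug [.leaf B]) C := by
          rw [← ICtx2.swap]; exact hE2
        have out := IProvCF.rdivL G₀ (c2.fill2 [.leaf E]) A B C h1 hE2'
        have out' : IProvCF ((c2.fill2 [.leaf E]).plug ([.leaf (.rdiv B A)] ++ G₀)) C := by
          simpa using out
        rw [← ICtx2.swap] at out'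
        exact out'
      · intro i0
        have hb := hEσ i0
        have g1 := congrArg (sigmaHedge i0) (ICtx2.swap c2 [.leaf B] [])
        have g2 := congrArg (sigmaHedge i0)
          (ICtx2.swap c2 ([.leaf (.rdiv B A)] ++ G₀) [])
        simp [-ICtx2.swap, sigmaTy] at hb g1 g2 ⊢
        omega
      · intro i0
        have hb := hEτ i0
        have g1 := congrArg (tauHedge i0) (ICtx2.swap c2 [.leaf B] [])
        have g2 := congrArg (tauHedge i0)
          (ICtx2.swap c2 ([.leaf (.rdiv B A)] ++ G₀) [])
        simp [-ICtx2.swap, tauTy] at hb g1 g2 ⊢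
        omega
    · -- overlap : Δ = X ++ Y, zone = Y ++ Z
      obtain ⟨Y₁, rfl, rfl⟩ : ∃ Y₁, Y = [.leaf (.rdiv B A)] ++ Y₁ ∧ G₀ = Y₁ ++ Z := by
        rcases List.append_eq_append_iff.1 e2 with ⟨a, ha1, ha2⟩ | ⟨c', hc1, hc2⟩
        · exact ⟨a, ha1, ha2⟩
        · obtain ⟨h1', h2', h3'⟩ := singleton_seg hY (show ([] : IHedge) ++ Y ++ c'
            = [.leaf (.rdiv B A)] by simpa using hc1.symm)
          subst h3'
          exact ⟨[], by simpa using h2', by simpa using hc2.symm⟩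
      obtain ⟨E₁, f1, f2, fσ, fτ⟩ := ih1 (.hole Y₁ []) Z hZ (by simp [ICtx.plug])
      obtain ⟨E₂, g1p, g2p, gσ, gτ⟩ := ih2 K (X ++ [.leaf B]) (by simp [hX])
        (e4 [.leaf B]).symm
      refine ⟨.rdiv E₂ E₁, ?_, ?_, ?_, ?_⟩
      · refine IProvCF.rdivR _ E₁ E₂ hΔ ?_
        have s1 := IProvCF.rdivL (Y₁ ++ [.leaf E₁]) (.hole X []) A B E₂
          (by simpa [ICtx.plug] using f2) (by simpa [ICtx.plug] using g1p)
        rw [e1]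
        simpa [ICtx.plug] using s1
      · have out := IProvCF.rdivL Z K E₁ E₂ C f1 g2p
        rw [e3 [.leaf (.rdiv E₂ E₁)]]
        simpa using out
      · intro i0
        have hb := fσ i0; have hb2 := gσ i0
        have g3 := congrArg (sigmaHedge i0) (e3 ([] : IHedge))
        rw [e1]
        simp [sigmaTy, sigmaCtx, ICtx.plug] at hb hb2 g3 ⊢
        omega
      · intro i0
        have hb := fτ i0; have hb2 := gτ i0
        have g3 := congrArg (tauHedge i0) (e3 ([] : IHedge))
        rw [e1]
        simp [tauTy, tauCtx, ICtx.plug] at hb hb2 g3 ⊢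
        omega
    · -- overlap : zone = X ++ Y, Δ = Y ++ Z
      obtain ⟨X₁, rfl, rfl⟩ : ∃ X₁, X = [.leaf (.rdiv B A)] ++ X₁ ∧ G₀ = X₁ ++ Y := by
        rcases List.append_eq_append_iff.1 e1 with ⟨a, ha1, ha2⟩ | ⟨c', hc1, hc2⟩
        · exact ⟨a, ha1, ha2⟩
        · obtain ⟨h1', h2', h3'⟩ := singleton_seg hX (show ([] : IHedge) ++ X ++ c'
            = [.leaf (.rdiv B A)] by simpa using hc1.symm)
          subst h3'
          exact ⟨[], by simpa using h2', by simpa using hc2.symm⟩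
      obtain ⟨E₁, f1, f2, fσ, fτ⟩ := ih1 (.hole X₁ []) Y hY (by simp [ICtx.plug])
      obtain ⟨E₂, g1p, g2p, gσ, gτ⟩ := ih2 (K.comp (.hole [.leaf B] [])) Z hZ
        (by rw [e4]; simp [ICtx.plug])
      refine ⟨.mul E₁ E₂, ?_, ?_, ?_, ?_⟩
      · rw [e2]
        exact IProvCF.mulR Y Z E₁ E₂ f1 g1p
      · have s1 := IProvCF.rdivL (X₁ ++ [.leaf E₁]) (K.comp (.hole [] [.leaf E₂])) A B C
          (by simpa [ICtx.plug] using f2) (by simpa [ICtx.plug] using g2p)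
        have s2 := IProvCF.mulL
          (K.comp (.hole (.leaf (.rdiv B A) :: X₁) [])) E₁ E₂ C
          (by simpa [ICtx.plug] using s1)
        rw [e3 [.leaf (.mul E₁ E₂)]]
        simpa [ICtx.plug] using s2
      · intro i0
        have hb := fσ i0; have hb2 := gσ i0
        have g3 := congrArg (sigmaHedge i0) (e3 ([] : IHedge))
        rw [e2]
        simp [sigmaTy, sigmaCtx, ICtx.plug] at hb hb2 g3 ⊢
        omega
      · intro i0
        have hb := fτ i0; have hb2 := gτ i0
        have g3 := congrArg (tauHedge i0) (e3 ([] : IHedge))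
        rw [e2]
        simp [tauTy, tauCtx, ICtx.plug] at hb hb2 g3 ⊢
        omega
/-- Interpolation theorem for L◇_m. -/
theorem interpolation_LDiamond_m (G : ICtx) (D : IHedge) (C : ITy)
    (hD : D ≠ []) (h : IProv (G.plug D) C) :
    ∃ E : ITy,
      IProv D E ∧
      IProv (G.plug [.leaf E]) C ∧
      (∀ i, sigmaTy i E ≤ min (sigmaHedge i D) (sigmaCtx i G + sigmaTy i C)) ∧
      (∀ i, tauTy i E ≤ min (tauHedge i D) (tauCtx i G + tauTy i C)) := by
  obtain ⟨E, h1, h2, h3, h4⟩ := interpCF h.toCF G D hD rfl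
  exact ⟨E, h1.toProv, h2.toProv, h3, h4⟩
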